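/- arXiv:0809.4647 — 9 statements merged into one kernel-verified Lean document; each statement's English description precedes it below -/
import Mathlib

section
/- Let Θ be a BK-space containing all canonical vectors e_i and suppose there is λ ≥ 1 such that ‖∑_{i=1}^n c_i e_i‖_Θ ≤ λ‖c‖_Θ for all c ∈ Θ and n ∈ ℕ (a λ-BK-space). If {g_i} ⊂ X* is a Θ-Bessel sequence for a Banach space X with bound B (i.e., {g_i(f)} ∈ Θ and ‖{g_i(f)}‖_Θ ≤ B‖f‖ for all f ∈ X), and if Y ⊂ X is a dense subspace, then each g_i extends uniquely to a continuous functional on X, and {g_i} is a Θ-Bessel sequence for X with bound λB when restricted through the closure of Y. -/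
open Filter Topology

noncomputable section

def IsNormOn {X : Type*} [AddCommGroup X] [Module ℝ X] (S : Set X) (N : X → ℝ) : Prop :=
  (0 : X) ∈ S ∧ (∀ c ∈ S, ∀ d ∈ S, c + d ∈ S) ∧ (∀ (a : ℝ), ∀ c ∈ S, a • c ∈ S) ∧
  (∀ c ∈ S, 0 ≤ N c) ∧ (∀ c ∈ S, N c = 0 → c = 0) ∧
  (∀ c ∈ S, ∀ d ∈ S, N (c + d) ≤ N c + N d) ∧
  (∀ (a : ℝ), ∀ c ∈ S, N (a • c) = |a| * N c)

def IsBanachOn {X : Type*} [AddCommGroup X] [Module ℝ X] (S : Set X) (N : X → ℝ) : Prop :=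
  IsNormOn S N ∧ ∀ u : ℕ → X, (∀ n, u n ∈ S) →
    (∀ ε > 0, ∃ M, ∀ m ≥ M, ∀ n ≥ M, N (u m - u n) < ε) →
    ∃ x ∈ S, Tendsto (fun n => N (u n - x)) atTop (nhds 0)

def IsBKOn (S : Set (ℕ → ℝ)) (N : (ℕ → ℝ) → ℝ) : Prop :=
  IsBanachOn S N ∧ ∀ i, ∃ K : ℝ, ∀ c ∈ S, |c i| ≤ K * N c

/-! The coordinate functionals of a BK-space are bounded, so each `g i` is bounded on `Y` and
extends uniquely by density. For `f ∈ X` pick `yₙ ∈ Y` with `yₙ → f`: the Bessel bound makes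
`({g i yₙ})ₙ` Cauchy in `Θ`, its limit agrees coordinatewise with `{G i f}`, and the triangle
inequality passes the bound `B ‖yₙ‖` to the limit; `λ ≥ 1` does the rest. -/

theorem LinearMap.existsUnique_extend_of_dense {𝕜 E F : Type*} [NontriviallyNormedField 𝕜]
    [SeminormedAddCommGroup E] [NormedSpace 𝕜 E] [NormedAddCommGroup F] [NormedSpace 𝕜 F]
    [CompleteSpace F] {Y : Submodule 𝕜 E} (hY : Dense (Y : Set E)) (f : Y →ₗ[𝕜] F) (C : ℝ)
    (hf : ∀ y : Y, ‖f y‖ ≤ C * ‖(y : E)‖) :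
    ∃! G : E →L[𝕜] F, ∀ y : Y, G y = f y := by
  have hdense : DenseRange Y.subtype := hY.denseRange_val
  refine ⟨f.extendOfNorm Y.subtype, extendOfNorm_eq hdense ⟨C, hf⟩, fun G hG => ?_⟩
  exact (extendOfNorm_unique hdense C hf G (LinearMap.ext hG)).symm

theorem LinearMap.normCauchy_of_bound {E V : Type*} [SeminormedAddCommGroup E] [NormedSpace ℝ E]
    [AddCommGroup V] [Module ℝ V] (N : V → ℝ) (T : E →ₗ[ℝ] V) (B : ℝ)
    (hT : ∀ y, N (T y) ≤ B * ‖y‖) {u : ℕ → E} (hu : CauchySeq u) :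
    ∀ ε > 0, ∃ M, ∀ m ≥ M, ∀ n ≥ M, N (T (u m) - T (u n)) < ε := by
  intro ε hε
  obtain ⟨M, hM⟩ := Metric.cauchySeq_iff.1 hu (ε / (|B| + 1)) (by positivity)
  refine ⟨M, fun m hm n hn => ?_⟩
  have hdist : ‖u m - u n‖ < ε / (|B| + 1) := by simpa [dist_eq_norm] using hM m hm n hn
  calc N (T (u m) - T (u n)) = N (T (u m - u n)) := by rw [map_sub]
    _ ≤ B * ‖u m - u n‖ := hT _
    _ ≤ (|B| + 1) * ‖u m - u n‖ := by
        gcongr; linarith [le_abs_self B]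
    _ < (|B| + 1) * (ε / (|B| + 1)) := by gcongr
    _ = ε := by field_simp

namespace IsNormOn

variable {X : Type*} [AddCommGroup X] [Module ℝ X] {S : Set X} {N : X → ℝ}

theorem nonneg (h : IsNormOn S N) {c : X} (hc : c ∈ S) : 0 ≤ N c := h.2.2.2.1 c hc

theorem sub_mem (h : IsNormOn S N) {c d : X} (hc : c ∈ S) (hd : d ∈ S) : c - d ∈ S := by
  rw [sub_eq_add_neg, ← neg_one_smul ℝ d]
  exact h.2.1 c hc _ (h.2.2.1 (-1) d hd)

theorem apply_sub_comm (h : IsNormOn S N) {c d : X} (hc : c ∈ S) (hd : d ∈ S) :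
    N (c - d) = N (d - c) := by
  rw [← neg_sub d c, ← neg_one_smul ℝ (d - c), h.2.2.2.2.2.2 (-1) _ (h.sub_mem hd hc)]
  simp

theorem le_apply_sub_add (h : IsNormOn S N) {c d : X} (hc : c ∈ S) (hd : d ∈ S) :
    N d ≤ N (c - d) + N c := by
  calc N d = N ((d - c) + c) := by rw [sub_add_cancel]
    _ ≤ N (d - c) + N c := h.2.2.2.2.2.1 _ (h.sub_mem hd hc) c hc
    _ = N (c - d) + N c := by rw [h.apply_sub_comm hd hc]

end IsNormOn

namespace IsBKOn

variable {S : Set (ℕ → ℝ)} {N : (ℕ → ℝ) → ℝ}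

theorem isNormOn (h : IsBKOn S N) : IsNormOn S N := h.1.1

theorem exists_nonneg_coord_bound (h : IsBKOn S N) (i : ℕ) :
    ∃ K, 0 ≤ K ∧ ∀ c ∈ S, |c i| ≤ K * N c := by
  obtain ⟨K, hK⟩ := h.2 i
  refine ⟨max K 0, le_max_right K 0, fun c hc => (hK c hc).trans ?_⟩
  exact mul_le_mul_of_nonneg_right (le_max_left K 0) (h.isNormOn.nonneg hc)

theorem tendsto_apply_of_tendsto (h : IsBKOn S N) {c : ℕ → ℕ → ℝ} {x : ℕ → ℝ}
    (hc : ∀ n, c n ∈ S) (hx : x ∈ S) (hlim : Tendsto (fun n => N (c n - x)) atTop (𝓝 0))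
    (i : ℕ) : Tendsto (fun n => c n i) atTop (𝓝 (x i)) := by
  obtain ⟨K, -, hK⟩ := h.exists_nonneg_coord_bound i
  have hbound : ∀ n, ‖c n i - x i‖ ≤ K * N (c n - x) :=
    fun n => hK _ (h.isNormOn.sub_mem (hc n) hx)
  have hsub : Tendsto (fun n => c n i - x i) atTop (𝓝 0) :=
    squeeze_zero_norm hbound (by simpa using hlim.const_mul K)
  simpa using hsub.add_const (x i)

theorem mem_and_le_of_tendsto_apply (h : IsBKOn S N) {c : ℕ → ℕ → ℝ} {a b : ℕ → ℝ} {β : ℝ}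
    (hc : ∀ n, c n ∈ S) (hcauchy : ∀ ε > 0, ∃ M, ∀ m ≥ M, ∀ n ≥ M, N (c m - c n) < ε)
    (ha : ∀ i, Tendsto (fun n => c n i) atTop (𝓝 (a i)))
    (hb : ∀ n, N (c n) ≤ b n) (hβ : Tendsto b atTop (𝓝 β)) :
    a ∈ S ∧ N a ≤ β := by
  obtain ⟨x, hxS, hxlim⟩ := h.1.2 c hc hcauchy
  have hax : a = x := funext fun i =>
    tendsto_nhds_unique (ha i) (h.tendsto_apply_of_tendsto hc hxS hxlim i)
  subst hax
  refine ⟨hxS, le_of_tendsto_of_tendsto' tendsto_const_nhds (by simpa using hxlim.add hβ)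
    fun n => ?_⟩
  exact (h.isNormOn.le_apply_sub_add (hc n) hxS).trans (by linarith [hb n])

end IsBKOn

theorem bessel_extension_dense_subspace_general
    {X : Type*} [NormedAddCommGroup X] [NormedSpace ℝ X]
    (Y : Submodule ℝ X) (hY : Dense (Y : Set X))
    (S : Set (ℕ → ℝ)) (N : (ℕ → ℝ) → ℝ) (hBK : IsBKOn S N)
    (lam : ℝ) (hlam : 1 ≤ lam)
    (g : ℕ → Y →ₗ[ℝ] ℝ) (B : ℝ)
    (hB : ∀ y : Y, (fun i => g i y) ∈ S ∧ N (fun i => g i y) ≤ B * ‖(y : X)‖) :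
    (∀ i, ∃! G : X →L[ℝ] ℝ, ∀ y : Y, G y = g i y) ∧
    (∀ G : ℕ → X →L[ℝ] ℝ, (∀ i, ∀ y : Y, G i y = g i y) →
      ∀ f : X, (fun i => G i f) ∈ S ∧ N (fun i => G i f) ≤ lam * B * ‖f‖) := by
  refine ⟨fun i => ?_, fun G hG f => ?_⟩
  · obtain ⟨K, hK0, hK⟩ := hBK.exists_nonneg_coord_bound i
    refine (g i).existsUnique_extend_of_dense hY (K * B) fun y => ?_
    calc ‖g i y‖ ≤ K * N (fun j => g j y) := hK _ (hB y).1
      _ ≤ K * B * ‖(y : X)‖ := by rw [mul_assoc]; exact mul_le_mul_of_nonneg_left (hB y).2 hK0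
  obtain ⟨u, hu, hulim⟩ := mem_closure_iff_seq_limit.1 (hY.closure_eq ▸ Set.mem_univ f)
  let y : ℕ → Y := fun n => ⟨u n, hu n⟩
  have hcauchy := (LinearMap.pi g).normCauchy_of_bound N B (fun y => (hB y).2)
    (isUniformEmbedding_subtype_val.isUniformInducing.cauchy_map_iff.1 hulim.cauchySeq :
      CauchySeq y)
  have hcoord : ∀ i, Tendsto (fun n => g i (y n)) atTop (𝓝 (G i f)) := fun i =>
    (((G i).continuous.tendsto f).comp hulim).congr fun n => hG i (y n)
  obtain ⟨hmem, hle⟩ := hBK.mem_and_le_of_tendsto_apply (fun n => (hB (y n)).1) hcauchy hcoord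
    (fun n => (hB (y n)).2) (((continuous_norm.tendsto f).comp hulim).const_mul B)
  have hBf : 0 ≤ B * ‖f‖ := (hBK.isNormOn.nonneg hmem).trans hle
  refine ⟨hmem, hle.trans ?_⟩
  rw [mul_assoc]
  exact le_mul_of_one_le_left hBf hlam

/-- a `Θ`-Bessel sequence (bound `B`) on a dense subspace `Y` of a Banach
space `X`, where `Θ = (S, N)` is a `λ`-BK-space, extends uniquely to continuous
functionals on `X`, and the extended sequence is `Θ`-Bessel for `X` with bound `λB`. -/
theorem bessel_extension_dense_subspace
    {X : Type*} [NormedAddCommGroup X] [NormedSpace ℝ X] [CompleteSpace X]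
    (Y : Submodule ℝ X) (hY : Dense (Y : Set X))
    (S : Set (ℕ → ℝ)) (N : (ℕ → ℝ) → ℝ) (hBK : IsBKOn S N)
    (lam : ℝ) (hlam : 1 ≤ lam)
    (hcanon : ∀ i, Pi.single i (1 : ℝ) ∈ S)
    (htrunc : ∀ c ∈ S, ∀ n : ℕ, N (fun j => if j < n then c j else 0) ≤ lam * N c)
    (g : ℕ → Y →ₗ[ℝ] ℝ) (B : ℝ)
    (hB : ∀ y : Y, (fun i => g i y) ∈ S ∧ N (fun i => g i y) ≤ B * ‖(y : X)‖) :
    (∀ i, ∃! G : X →L[ℝ] ℝ, ∀ y : Y, G y = g i y) ∧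
    (∀ G : ℕ → X →L[ℝ] ℝ, (∀ i, ∀ y : Y, G i y = g i y) →
      ∀ f : X, (fun i => G i f) ∈ S ∧ N (fun i => G i f) ≤ lam * B * ‖f‖) :=
  bessel_extension_dense_subspace_general Y hY S N hBK lam hlam g B hB
end
end

section
/- Let X_s (s ∈ ℕ₀) be Banach spaces with X_{s+1} ⊆ X_s, ‖·‖_s ≤ ‖·‖_{s+1}, and X_F := ⋂_s X_s dense in each X_s. Let Θ_s be BK-spaces with the analogous properties and let {g_i} ⊂ X_F* be a pre-F-frame for X_F with respect to Θ_F := ⋂_s Θ_s, i.e., for each s there are 0 < A_s ≤ B_s with {g_i(f)} ∈ Θ_F and A_s‖f‖_s ≤ ‖{g_i(f)}‖_{Θ,s} ≤ B_s‖f‖_s for all f ∈ X_F. Then the range R(U) of the analysis operator U : X_F → Θ_F, Uf = {g_i(f)}, is closed in the Fréchet space Θ_F, and the inverse U⁻¹ : R(U) → X_F satisfies ‖U⁻¹c‖_s ≤ (1/A_s)‖c‖_{Θ,s} for every s and every c ∈ R(U). -/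
open Filter Topology

noncomputable section

def IsScale {X : Type*} [AddCommGroup X] [Module ℝ X] (S : ℕ → Set X) (N : ℕ → X → ℝ) : Prop :=
  (∀ s, IsBanachOn (S s) (N s)) ∧ (∀ s, S (s+1) ⊆ S s) ∧
  (∀ s, ∀ f ∈ S (s+1), N s f ≤ N (s+1) f) ∧
  (∀ s, ∀ f ∈ S s, ∀ ε > 0, ∃ h ∈ ⋂ t, S t, N s (f - h) < ε)

/-- for a pre-F-frame `(g i)` for `X_F = ⋂ X_s` with respect to
`Θ_F = ⋂ Θ_s`, the range of the analysis operator `U f = (g i f)` is closed in the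
Fréchet space `Θ_F`, and `‖U⁻¹ c‖_s ≤ (1/A_s) ‖c‖_{Θ,s}`. -/
theorem preFframe_range_closed_inverse_bounded
    {X : Type*} [AddCommGroup X] [Module ℝ X]
    (S : ℕ → Set X) (N : ℕ → X → ℝ) (hX : IsScale S N)
    (T : ℕ → Set (ℕ → ℝ)) (NT : ℕ → (ℕ → ℝ) → ℝ) (hT : IsScale T NT)
    (hBK : ∀ s, ∀ i, ∃ K : ℝ, ∀ c ∈ T s, |c i| ≤ K * NT s c)
    (g : ℕ → X →ₗ[ℝ] ℝ) (A B : ℕ → ℝ)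
    (hA : ∀ s, 0 < A s) (hAB : ∀ s, A s ≤ B s)
    (hframe : ∀ f ∈ ⋂ s, S s, (fun i => g i f) ∈ ⋂ s, T s ∧
      ∀ s, A s * N s f ≤ NT s (fun i => g i f) ∧ NT s (fun i => g i f) ≤ B s * N s f) :
    (∀ c ∈ ⋂ s, T s,
      (∃ u : ℕ → X, (∀ n, u n ∈ ⋂ s, S s) ∧
        ∀ s, Tendsto (fun n => NT s ((fun i => g i (u n)) - c)) atTop (nhds 0)) →
      ∃ f ∈ ⋂ s, S s, (fun i => g i f) = c) ∧
    (∀ f ∈ ⋂ s, S s, ∀ s, N s f ≤ (1 / A s) * NT s (fun i => g i f)) := by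
  obtain ⟨hXban, hXsub, hXmono, -⟩ := hX
  obtain ⟨hTban, hTsub, hTmono, -⟩ := hT
  -- closure under subtraction
  have Ssub : ∀ s, ∀ a ∈ S s, ∀ b ∈ S s, a - b ∈ S s := by
    intro s a ha b hb
    have h := (hXban s).1
    have := h.2.1 a ha ((-1:ℝ) • b) (h.2.2.1 (-1) b hb)
    simpa [sub_eq_add_neg] using this
  have Tsub : ∀ s, ∀ a ∈ T s, ∀ b ∈ T s, a - b ∈ T s := by
    intro s a ha b hb
    have h := (hTban s).1
    have := h.2.1 a ha ((-1:ℝ) • b) (h.2.2.1 (-1) b hb)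
    simpa [sub_eq_add_neg] using this
  -- triangle inequality for differences
  have Ntri : ∀ s, ∀ a ∈ S s, ∀ b ∈ S s, N s (a - b) ≤ N s a + N s b := by
    intro s a ha b hb
    have h := (hXban s).1
    have h1 := h.2.2.2.2.2.1 a ha ((-1:ℝ)•b) (h.2.2.1 (-1) b hb)
    have h2 : N s ((-1:ℝ)•b) = N s b := by rw [h.2.2.2.2.2.2 (-1) b hb]; simp
    rw [h2] at h1
    rw [sub_eq_add_neg, ← neg_one_smul ℝ b]
    exact h1
  have NTtri : ∀ s, ∀ a ∈ T s, ∀ b ∈ T s, NT s (a - b) ≤ NT s a + NT s b := by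
    intro s a ha b hb
    have h := (hTban s).1
    have h1 := h.2.2.2.2.2.1 a ha ((-1:ℝ)•b) (h.2.2.1 (-1) b hb)
    have h2 : NT s ((-1:ℝ)•b) = NT s b := by rw [h.2.2.2.2.2.2 (-1) b hb]; simp
    rw [h2] at h1
    rw [sub_eq_add_neg, ← neg_one_smul ℝ b]
    exact h1
  -- norm symmetry
  have Nsymm : ∀ s, ∀ a ∈ S s, ∀ b ∈ S s, N s (a - b) = N s (b - a) := by
    intro s a ha b hb
    have h := (hXban s).1
    have h2 := h.2.2.2.2.2.2 (-1) (b - a) (Ssub s b hb a ha)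
    simpa [neg_sub] using h2
  -- monotone chains
  have Schain : ∀ s t, s ≤ t → S t ⊆ S s := by
    intro s t h
    induction h with
    | refl => exact fun _ h => h
    | step h ih => exact fun x hx => ih (hXsub _ hx)
  have Nchain : ∀ s t, s ≤ t → ∀ f ∈ S t, N s f ≤ N t f := by
    intro s t h
    induction h with
    | refl => exact fun f _ => le_refl _
    | @step t' h ih =>
      intro f hf
      exact le_trans (ih f (hXsub _ hf)) (hXmono t' f hf)
  constructor
  · intro c hc ⟨u, huF, hconv⟩
    have hcs : ∀ s, c ∈ T s := fun s => Set.mem_iInter.1 hc s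
    have hus : ∀ n s, u n ∈ S s := fun n s => Set.mem_iInter.1 (huF n) s
    have hUmem : ∀ n, (fun i => g i (u n)) ∈ ⋂ s, T s := fun n => (hframe _ (huF n)).1
    have hUs : ∀ n s, (fun i => g i (u n)) ∈ T s := fun n s => Set.mem_iInter.1 (hUmem n) s
    -- convergence of NT in quantitative form
    have hconv' : ∀ s, ∀ ε > (0:ℝ), ∃ M, ∀ n ≥ M, NT s ((fun i => g i (u n)) - c) < ε := by
      intro s ε hε
      have := (Metric.tendsto_atTop.1 (hconv s)) ε hε
      obtain ⟨M, hM⟩ := this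
      refine ⟨M, fun n hn => ?_⟩
      have := hM n hn
      rw [Real.dist_eq, sub_zero] at this
      exact lt_of_le_of_lt (le_abs_self _) this
    -- u is Cauchy in each N s
    have hcauchy : ∀ s, ∀ ε > (0:ℝ), ∃ M, ∀ m ≥ M, ∀ n ≥ M, N s (u m - u n) < ε := by
      intro s ε hε
      obtain ⟨M, hM⟩ := hconv' s (A s * ε / 2) (div_pos (mul_pos (hA s) hε) two_pos)
      refine ⟨M, fun m hm n hn => ?_⟩
      have hmem : u m - u n ∈ ⋂ t, S t := by
        refine Set.mem_iInter.2 fun t => Ssub t _ (hus m t) _ (hus n t)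
      have hlow := ((hframe _ hmem).2 s).1
      have heq : (fun i => g i (u m - u n)) =
          ((fun i => g i (u m)) - c) - ((fun i => g i (u n)) - c) := by
        funext i
        simp [map_sub]
      have htr : NT s ((fun i => g i (u m - u n))) ≤
          NT s ((fun i => g i (u m)) - c) + NT s ((fun i => g i (u n)) - c) := by
        rw [heq]
        exact NTtri s _ (Tsub s _ (hUs m s) _ (hcs s)) _ (Tsub s _ (hUs n s) _ (hcs s))
      have h1 := hM m hm
      have h2 := hM n hn
      have : A s * N s (u m - u n) < A s * ε := by
        calc A s * N s (u m - u n) ≤ NT s ((fun i => g i (u m - u n))) := hlow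
        _ ≤ _ := htr
        _ < A s * ε / 2 + A s * ε / 2 := by linarith
        _ = A s * ε := by ring
      exact lt_of_mul_lt_mul_left this (le_of_lt (hA s))
    -- limits at each level
    have hlim : ∀ s, ∃ x ∈ S s, Tendsto (fun n => N s (u n - x)) atTop (nhds 0) :=
      fun s => (hXban s).2 u (fun n => hus n s) (hcauchy s)
    choose x hxm hxc using hlim
    -- all limits agree with x 0
    have hxeq : ∀ s, x s = x 0 := by
      intro s
      have hx0s : x s ∈ S 0 := Schain 0 s (Nat.zero_le s) (hxm s)
      -- u n → x s in N 0 as well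
      have hconv0 : Tendsto (fun n => N 0 (u n - x s)) atTop (nhds 0) := by
        have hb : ∀ n, N 0 (u n - x s) ≤ N s (u n - x s) := fun n =>
          Nchain 0 s (Nat.zero_le s) _ (Ssub s _ (hus n s) _ (hxm s))
        have hnn : ∀ n, 0 ≤ N 0 (u n - x s) := fun n =>
          ((hXban 0).1).2.2.2.1 _ (Ssub 0 _ (hus n 0) _ hx0s)
        exact squeeze_zero hnn hb (hxc s)
      -- squeeze: N 0 (x s - x 0) = 0
      have hle : ∀ n, N 0 (x s - x 0) ≤ N 0 (u n - x s) + N 0 (u n - x 0) := by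
        intro n
        have h1 : x s - x 0 = (u n - x 0) - (u n - x s) := by abel
        rw [h1]
        calc N 0 ((u n - x 0) - (u n - x s)) ≤ N 0 (u n - x 0) + N 0 (u n - x s) :=
          Ntri 0 _ (Ssub 0 _ (hus n 0) _ (hxm 0)) _ (Ssub 0 _ (hus n 0) _ hx0s)
        _ = _ := by ring
      have hzero : N 0 (x s - x 0) ≤ 0 := by
        have hsum : Tendsto (fun n => N 0 (u n - x s) + N 0 (u n - x 0)) atTop (nhds 0) := by
          simpa using hconv0.add (hxc 0)
        exact le_of_tendsto_of_tendsto tendsto_const_nhds hsum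
          (Filter.Eventually.of_forall hle)
      have hmem0 : x s - x 0 ∈ S 0 := Ssub 0 _ hx0s _ (hxm 0)
      have hnn := ((hXban 0).1).2.2.2.1 _ hmem0
      have : N 0 (x s - x 0) = 0 := le_antisymm hzero hnn
      have := ((hXban 0).1).2.2.2.2.1 _ hmem0 this
      exact sub_eq_zero.1 this
    -- the limit f
    refine ⟨x 0, Set.mem_iInter.2 fun s => (hxeq s) ▸ hxm s, ?_⟩
    have hfF : x 0 ∈ ⋂ s, S s := Set.mem_iInter.2 fun s => (hxeq s) ▸ hxm s
    -- show coordinatewise equality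
    funext i
    obtain ⟨K1, hK1⟩ := hBK 0 i
    -- g i (u n) → c i
    have hc1 : Tendsto (fun n => g i (u n) - c i) atTop (nhds 0) := by
      apply squeeze_zero_norm (a := fun n => (max K1 0) * NT 0 ((fun j => g j (u n)) - c))
      · intro n
        have hmem : (fun j => g j (u n)) - c ∈ T 0 := Tsub 0 _ (hUs n 0) _ (hcs 0)
        have h1 := hK1 _ hmem
        have hnn := ((hTban 0).1).2.2.2.1 _ hmem
        have : |((fun j => g j (u n)) - c) i| ≤ (max K1 0) * NT 0 ((fun j => g j (u n)) - c) :=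
          le_trans h1 (by apply mul_le_mul_of_nonneg_right (le_max_left _ _) hnn)
        simpa [Pi.sub_apply] using this
      · simpa using (hconv 0).const_mul (max K1 0)
    -- g i (u n) → g i (x 0)
    have hc2 : Tendsto (fun n => g i (u n) - g i (x 0)) atTop (nhds 0) := by
      apply squeeze_zero_norm
        (a := fun n => (max K1 0) * (B 0 * N 0 (u n - x 0)))
      · intro n
        have hmemS : u n - x 0 ∈ ⋂ t, S t :=
          Set.mem_iInter.2 fun t => Ssub t _ (hus n t) _ (Set.mem_iInter.1 hfF t)
        have hmemT := (hframe _ hmemS).1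
        have hhi := ((hframe _ hmemS).2 0).2
        have h1 := hK1 _ (Set.mem_iInter.1 hmemT 0)
        have hnn := ((hTban 0).1).2.2.2.1 _ (Set.mem_iInter.1 hmemT 0)
        have h2 : |g i (u n - x 0)| ≤ (max K1 0) * NT 0 (fun j => g j (u n - x 0)) :=
          le_trans h1 (mul_le_mul_of_nonneg_right (le_max_left _ _) hnn)
        have h3 : (max K1 0) * NT 0 (fun j => g j (u n - x 0)) ≤
            (max K1 0) * (B 0 * N 0 (u n - x 0)) :=
          mul_le_mul_of_nonneg_left hhi (le_max_right _ _)
        have h4 : g i (u n) - g i (x 0) = g i (u n - x 0) := by rw [map_sub]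
        rw [Real.norm_eq_abs, h4]
        exact le_trans h2 h3
      · have := ((hxc 0).const_mul (B 0)).const_mul (max K1 0)
        simpa [mul_assoc] using this
    -- uniqueness of limits in ℝ
    have : Tendsto (fun n => (g i (u n) - g i (x 0)) - (g i (u n) - c i)) atTop
        (nhds 0) := by simpa using hc2.sub hc1
    have heq : Tendsto (fun _ : ℕ => c i - g i (x 0)) atTop (nhds 0) := by
      convert this using 2 with n
      ring
    have := tendsto_nhds_unique tendsto_const_nhds heq
    linarith [this]
  · intro f hf s
    have hlow := ((hframe f hf).2 s).1
    have hA' := hA s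
    calc N s f = (1 / A s) * (A s * N s f) := by field_simp
    _ ≤ (1 / A s) * NT s (fun i => g i f) := by
        apply mul_le_mul_of_nonneg_left hlow (by positivity)
end
end

section
/- A pre-F-frame {g_i} for X_F with respect to Θ_F is an F-frame (i.e., admits an F-bounded left inverse V : Θ_F → X_F of the analysis operator U with VUf = f) if and only if there exists an F-bounded projection from Θ_F onto the range R(U) of U. -/
open Filter Topology

noncomputable section

/-!
Proof idea: if `V U = id` on `X_F`, then `P = U V` is an F-bounded projection onto `R(U)`.
Conversely, the lower frame bound makes `U` injective on `X_F`, so `U` has a linear left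
inverse `L` on `X_F`; then `V = L P` is a left inverse of `U`, and it is F-bounded because on
`Θ_F` we have `P c = U (V c)`, whence `A_s ‖V c‖_s ≤ ‖P c‖_{Θ,s} ≤ K_s ‖c‖_{Θ,s}`.
-/

namespace IsNormOn

variable {X : Type*} [AddCommGroup X] [Module ℝ X] {S : Set X} {N : X → ℝ}

theorem map_zero (h : IsNormOn S N) : N 0 = 0 := by
  simpa using h.2.2.2.2.2.2 0 0 h.1

def submodule (h : IsNormOn S N) : Submodule ℝ X where
  carrier := S
  zero_mem' := h.1
  add_mem' ha hb := h.2.1 _ ha _ hb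
  smul_mem' := h.2.2.1

theorem mem_iInf_submodule {S : ℕ → Set X} {N : ℕ → X → ℝ} (h : ∀ s, IsNormOn (S s) (N s))
    {f : X} : f ∈ ⨅ s, (h s).submodule ↔ f ∈ ⋂ s, S s := by
  simp only [Submodule.mem_iInf, Set.mem_iInter]
  rfl

end IsNormOn

section AnalysisOperator

variable {X Y : Type*} [AddCommGroup X] [Module ℝ X] [AddCommGroup Y] [Module ℝ Y]
  {S : ℕ → Set X} {N : ℕ → X → ℝ} {T : ℕ → Set Y} {NT : ℕ → Y → ℝ} {U : X →ₗ[ℝ] Y}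
  {A B : ℕ → ℝ}

theorem ker_comp_subtype_iInf_eq_bot_of_lowerBound (hS : ∀ s, IsNormOn (S s) (N s))
    {s₀ : ℕ} (hNT : NT s₀ 0 = 0) (hA : 0 < A s₀)
    (hlow : ∀ f ∈ ⋂ s, S s, A s₀ * N s₀ f ≤ NT s₀ (U f)) :
    LinearMap.ker (U ∘ₗ (⨅ s, (hS s).submodule).subtype) = ⊥ := by
  refine (Submodule.eq_bot_iff _).2 fun ⟨f, hf⟩ hUf => Subtype.ext ?_
  have hfS : f ∈ ⋂ s, S s := (IsNormOn.mem_iInf_submodule hS).1 hf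
  have hf₀ : f ∈ S s₀ := Set.mem_iInter.1 hfS s₀
  have hUf₀ : U f = 0 := LinearMap.mem_ker.1 hUf
  have hle : A s₀ * N s₀ f ≤ 0 := by simpa [hUf₀, hNT] using hlow f hfS
  have hN : N s₀ f = 0 :=
    le_antisymm (nonpos_of_mul_nonpos_right hle hA) ((hS s₀).2.2.2.1 f hf₀)
  exact (hS s₀).2.2.2.2.1 f hf₀ hN

theorem exists_bounded_projection_of_bounded_leftInverse
    (hup : ∀ f ∈ ⋂ s, S s, ∀ s, NT s (U f) ≤ B s * N s f) (hB : ∀ s, 0 ≤ B s)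
    (V : Y →ₗ[ℝ] X) (hVmem : ∀ c ∈ ⋂ s, T s, V c ∈ ⋂ s, S s)
    (hVbdd : ∀ s, ∃ K : ℝ, ∀ c ∈ ⋂ t, T t, N s (V c) ≤ K * NT s c)
    (hVU : ∀ f ∈ ⋂ s, S s, V (U f) = f) :
    ∃ P : Y →ₗ[ℝ] Y,
      (∀ c ∈ ⋂ s, T s, ∃ f ∈ ⋂ s, S s, P c = U f) ∧
      (∀ s, ∃ K : ℝ, ∀ c ∈ ⋂ t, T t, NT s (P c) ≤ K * NT s c) ∧
      (∀ f ∈ ⋂ s, S s, P (U f) = U f) := by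
  refine ⟨U ∘ₗ V, fun c hc => ⟨V c, hVmem c hc, rfl⟩, fun s => ?_, fun f hf => ?_⟩
  · obtain ⟨K, hK⟩ := hVbdd s
    refine ⟨B s * K, fun c hc => ?_⟩
    calc NT s (U (V c)) ≤ B s * N s (V c) := hup _ (hVmem c hc) s
      _ ≤ B s * (K * NT s c) := mul_le_mul_of_nonneg_left (hK c hc) (hB s)
      _ = B s * K * NT s c := (mul_assoc _ _ _).symm
  · simp [hVU f hf]

theorem exists_bounded_leftInverse_of_bounded_projection (hS : ∀ s, IsNormOn (S s) (N s))
    (hNT : NT 0 0 = 0) (hA : ∀ s, 0 < A s)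
    (hlow : ∀ f ∈ ⋂ s, S s, ∀ s, A s * N s f ≤ NT s (U f))
    (P : Y →ₗ[ℝ] Y) (hPrange : ∀ c ∈ ⋂ s, T s, ∃ f ∈ ⋂ s, S s, P c = U f)
    (hPbdd : ∀ s, ∃ K : ℝ, ∀ c ∈ ⋂ t, T t, NT s (P c) ≤ K * NT s c)
    (hPU : ∀ f ∈ ⋂ s, S s, P (U f) = U f) :
    ∃ V : Y →ₗ[ℝ] X,
      (∀ c ∈ ⋂ s, T s, V c ∈ ⋂ s, S s) ∧
      (∀ s, ∃ K : ℝ, ∀ c ∈ ⋂ t, T t, N s (V c) ≤ K * NT s c) ∧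
      (∀ f ∈ ⋂ s, S s, V (U f) = f) := by
  set XF := ⨅ s, (hS s).submodule
  obtain ⟨L, hL⟩ := (U ∘ₗ XF.subtype).exists_leftInverse_of_injective
    (ker_comp_subtype_iInf_eq_bot_of_lowerBound hS hNT (hA 0) fun f hf => hlow f hf 0)
  have hLU : ∀ f ∈ ⋂ s, S s, (L (U f) : X) = f := fun f hf =>
    congrArg Subtype.val (LinearMap.congr_fun hL ⟨f, (IsNormOn.mem_iInf_submodule hS).2 hf⟩)
  refine ⟨XF.subtype ∘ₗ L ∘ₗ P, fun c _ => (IsNormOn.mem_iInf_submodule hS).1 (L (P c)).2,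
    fun s => ?_, fun f hf => by simp [hPU f hf, hLU f hf]⟩
  obtain ⟨K, hK⟩ := hPbdd s
  refine ⟨K / A s, fun c hc => ?_⟩
  obtain ⟨f, hf, hPc⟩ := hPrange c hc
  have hVc : (L (P c) : X) = f := by rw [hPc, hLU f hf]
  simp only [LinearMap.comp_apply, Submodule.subtype_apply, hVc]
  rw [div_mul_eq_mul_div, le_div_iff₀ (hA s)]
  calc N s f * A s = A s * N s f := mul_comm _ _
    _ ≤ NT s (P c) := hPc ▸ hlow f hf s
    _ ≤ K * NT s c := hK c hc

end AnalysisOperator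

theorem Fframe_iff_Fbounded_projection_general
    {X : Type*} [AddCommGroup X] [Module ℝ X]
    (S : ℕ → Set X) (N : ℕ → X → ℝ) (hX : IsScale S N)
    (T : ℕ → Set (ℕ → ℝ)) (NT : ℕ → (ℕ → ℝ) → ℝ) (hT : IsScale T NT)
    (g : ℕ → X →ₗ[ℝ] ℝ) (A B : ℕ → ℝ)
    (hA : ∀ s, 0 < A s) (hAB : ∀ s, A s ≤ B s)
    (hframe : ∀ f ∈ ⋂ s, S s, (fun i => g i f) ∈ ⋂ s, T s ∧
      ∀ s, A s * N s f ≤ NT s (fun i => g i f) ∧ NT s (fun i => g i f) ≤ B s * N s f) :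
    (∃ V : (ℕ → ℝ) →ₗ[ℝ] X,
      (∀ c ∈ ⋂ s, T s, V c ∈ ⋂ s, S s) ∧
      (∀ s, ∃ K : ℝ, ∀ c ∈ ⋂ t, T t, N s (V c) ≤ K * NT s c) ∧
      (∀ f ∈ ⋂ s, S s, V (fun i => g i f) = f))
    ↔
    (∃ P : (ℕ → ℝ) →ₗ[ℝ] (ℕ → ℝ),
      (∀ c ∈ ⋂ s, T s, ∃ f ∈ ⋂ s, S s, P c = fun i => g i f) ∧
      (∀ s, ∃ K : ℝ, ∀ c ∈ ⋂ t, T t, NT s (P c) ≤ K * NT s c) ∧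
      (∀ f ∈ ⋂ s, S s, P (fun i => g i f) = fun i => g i f)) := by
  constructor
  · rintro ⟨V, hVmem, hVbdd, hVU⟩
    exact exists_bounded_projection_of_bounded_leftInverse (U := LinearMap.pi g)
      (fun f hf s => ((hframe f hf).2 s).2) (fun s => (hA s).le.trans (hAB s))
      V hVmem hVbdd hVU
  · rintro ⟨P, hPrange, hPbdd, hPU⟩
    exact exists_bounded_leftInverse_of_bounded_projection (U := LinearMap.pi g)
      (fun s => (hX.1 s).1) (hT.1 0).1.map_zero hA (fun f hf s => ((hframe f hf).2 s).1)
      P hPrange hPbdd hPU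

/-- a pre-F-frame is an F-frame (admits an F-bounded left inverse `V` of the
analysis operator `U`) iff there is an F-bounded projection from `Θ_F` onto the range of
`U`. -/
theorem Fframe_iff_Fbounded_projection
    {X : Type*} [AddCommGroup X] [Module ℝ X]
    (S : ℕ → Set X) (N : ℕ → X → ℝ) (hX : IsScale S N)
    (T : ℕ → Set (ℕ → ℝ)) (NT : ℕ → (ℕ → ℝ) → ℝ) (hT : IsScale T NT)
    (hBK : ∀ s, ∀ i, ∃ K : ℝ, ∀ c ∈ T s, |c i| ≤ K * NT s c)
    (g : ℕ → X →ₗ[ℝ] ℝ) (A B : ℕ → ℝ)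
    (hA : ∀ s, 0 < A s) (hAB : ∀ s, A s ≤ B s)
    (hframe : ∀ f ∈ ⋂ s, S s, (fun i => g i f) ∈ ⋂ s, T s ∧
      ∀ s, A s * N s f ≤ NT s (fun i => g i f) ∧ NT s (fun i => g i f) ≤ B s * N s f) :
    (∃ V : (ℕ → ℝ) →ₗ[ℝ] X,
      (∀ c ∈ ⋂ s, T s, V c ∈ ⋂ s, S s) ∧
      (∀ s, ∃ K : ℝ, ∀ c ∈ ⋂ t, T t, N s (V c) ≤ K * NT s c) ∧
      (∀ f ∈ ⋂ s, S s, V (fun i => g i f) = f))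
    ↔
    (∃ P : (ℕ → ℝ) →ₗ[ℝ] (ℕ → ℝ),
      (∀ c ∈ ⋂ s, T s, ∃ f ∈ ⋂ s, S s, P c = fun i => g i f) ∧
      (∀ s, ∃ K : ℝ, ∀ c ∈ ⋂ t, T t, NT s (P c) ≤ K * NT s c) ∧
      (∀ f ∈ ⋂ s, S s, P (fun i => g i f) = fun i => g i f)) :=
  Fframe_iff_Fbounded_projection_general S N hX T NT hT g A B hA hAB hframe
end
end

section
/- Let {X_s}_{s∈ℕ₀} be a decreasing sequence of Banach spaces with increasing norms and dense intersection X_F, let Θ be a BK-space, and let {g_i} ⊂ X_0* satisfy the lower Θ-frame condition on X_0: there is A > 0 with {g_i(f)} ∈ Θ and A‖f‖_0 ≤ ‖{g_i(f)}‖_Θ for all f ∈ X_0. Define Θ_s := {{g_i(f)} : f ∈ X_s} with norm ‖{g_i(f)}‖_s := ‖f‖_s. Then each Θ_s is a BK-space, Θ_{s+1} ⊆ Θ_s with ‖·‖_s ≤ ‖·‖_{s+1}, ⋂_s Θ_s = {{g_i(f)} : f ∈ X_F} is dense in each Θ_s, and {g_i|_{X_F}} is an F-frame for X_F with respect to Θ_F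 with all frame bounds A_s = B_s = 1. -/
open Filter Topology

noncomputable section

/-- The image `{(g i f)_i : f ∈ A}` of a set `A ⊆ X` under the analysis map. -/
def imageSeq {X : Type*} [AddCommGroup X] [Module ℝ X]
    (g : ℕ → X →ₗ[ℝ] ℝ) (A : Set X) : Set (ℕ → ℝ) :=
  {c | ∃ f ∈ A, c = fun i => g i f}

/-- given a Banach scale `{X_s}`, a BK-space `Θ`, and `(g i) ⊂ X₀*`
satisfying the lower `Θ`-frame condition on `X₀`, the spaces
`Θ_s := {(g i f) : f ∈ X_s}` with norm `‖(g i f)‖_s := ‖f‖_s` form a decreasing scale of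
BK-spaces with increasing norms, `⋂ Θ_s = {(g i f) : f ∈ X_F}` is dense in each `Θ_s`,
and `(g i)|_{X_F}` is an F-frame for `X_F` w.r.t. `Θ_F` with all frame bounds `1`. -/
theorem construction_of_theta_scale
    {X : Type*} [AddCommGroup X] [Module ℝ X]
    (S : ℕ → Set X) (N : ℕ → X → ℝ) (hX : IsScale S N)
    (T0 : Set (ℕ → ℝ)) (N0 : (ℕ → ℝ) → ℝ) (hBK : IsBKOn T0 N0)
    (g : ℕ → X →ₗ[ℝ] ℝ)
    (hgc : ∀ i, ∃ C : ℝ, ∀ f ∈ S 0, |g i f| ≤ C * N 0 f)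
    (A : ℝ) (hA : 0 < A)
    (hlow : ∀ f ∈ S 0, (fun i => g i f) ∈ T0 ∧ A * N 0 f ≤ N0 (fun i => g i f)) :
    ∃ NΘ : ℕ → (ℕ → ℝ) → ℝ,
      (∀ s, ∀ f ∈ S s, NΘ s (fun i => g i f) = N s f) ∧
      (∀ s, IsBKOn (imageSeq g (S s)) (NΘ s)) ∧
      (∀ s, imageSeq g (S (s+1)) ⊆ imageSeq g (S s)) ∧
      (∀ s, ∀ c ∈ imageSeq g (S (s+1)), NΘ s c ≤ NΘ (s+1) c) ∧
      ((⋂ s, imageSeq g (S s)) = imageSeq g (⋂ s, S s)) ∧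
      (∀ s, ∀ c ∈ imageSeq g (S s), ∀ ε > 0,
        ∃ d ∈ imageSeq g (⋂ t, S t), NΘ s (c - d) < ε) ∧
      (∀ s, ∀ f ∈ ⋂ t, S t,
        1 * N s f ≤ NΘ s (fun i => g i f) ∧ NΘ s (fun i => g i f) ≤ 1 * N s f) ∧
      (∃ V : (ℕ → ℝ) →ₗ[ℝ] X,
        (∀ c ∈ ⋂ s, imageSeq g (S s), V c ∈ ⋂ s, S s) ∧
        (∀ s, ∃ K : ℝ, ∀ c ∈ ⋂ t, imageSeq g (S t), N s (V c) ≤ K * NΘ s c) ∧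
        (∀ f ∈ ⋂ s, S s, V (fun i => g i f) = f)) := by
    classical
  obtain ⟨hBanS, hdec, hmono, hdense⟩ := hX
  -- basic facts about the scale
  have hsub0 : ∀ s, S s ⊆ S 0 := by
    intro s
    induction s with
    | zero => exact fun x hx => hx
    | succ n ih => exact fun x hx => ih (hdec n hx)
  have hNmono0 : ∀ s, ∀ f ∈ S s, N 0 f ≤ N s f := by
    intro s
    induction s with
    | zero => exact fun f _ => le_rfl
    | succ n ih =>
      intro f hf
      exact le_trans (ih f (hdec n hf)) (hmono n f hf)
  have hN0zero : N0 0 = 0 := by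
    have h := hBK.1.1.2.2.2.2.2.2 0 0 hBK.1.1.1
    simpa using h
  -- injectivity of the analysis map on S 0
  have hinj : ∀ f ∈ S 0, (∀ i, g i f = 0) → f = 0 := by
    intro f hf hz
    have h1 : (fun i => g i f) = (0 : ℕ → ℝ) := funext hz
    have h2 := (hlow f hf).2
    rw [h1, hN0zero] at h2
    have h4 : 0 ≤ N 0 f := (hBanS 0).1.2.2.2.1 f hf
    have h3 : N 0 f = 0 := by nlinarith
    exact (hBanS 0).1.2.2.2.2.1 f hf h3
  -- the analysis operator
  set G : X →ₗ[ℝ] (ℕ → ℝ) := LinearMap.pi g with hG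
  have hGapp : ∀ f : X, G f = fun i => g i f := fun f => rfl
  -- S 0 as a submodule
  set S₀ : Submodule ℝ X :=
    { carrier := S 0
      add_mem' := fun {a b} ha hb => (hBanS 0).1.2.1 a ha b hb
      zero_mem' := (hBanS 0).1.1
      smul_mem' := fun a {c} hc => (hBanS 0).1.2.2.1 a c hc } with hS₀
  have hS₀mem : ∀ f : X, f ∈ S₀ ↔ f ∈ S 0 := fun f => Iff.rfl
  set M₀ : Submodule ℝ (ℕ → ℝ) := S₀.map G with hM₀
  have hM₀mem : ∀ c : ℕ → ℝ, c ∈ M₀ ↔ c ∈ imageSeq g (S 0) := by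
    intro c
    constructor
    · rintro ⟨f, hf, rfl⟩
      exact ⟨f, hf, rfl⟩
    · rintro ⟨f, hf, rfl⟩
      exact ⟨f, hf, rfl⟩
  -- restricted analysis operator and its inverse
  set G₀ : S₀ →ₗ[ℝ] M₀ :=
    G.restrict (fun x hx => Submodule.mem_map_of_mem hx) with hG₀
  have hG₀bij : Function.Bijective G₀ := by
    constructor
    · intro a b hab
      have h1 : G (a : X) = G (b : X) := congrArg Subtype.val hab
      have h2 : ∀ i, g i ((a : X) - (b : X)) = 0 := by
        intro i
        have := congrFun h1 i
        simp only [hGapp] at this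
        simp [map_sub, this]
      have h3 : (a : X) - (b : X) ∈ S 0 := (S₀.sub_mem a.2 b.2 : _)
      have h4 := hinj _ h3 h2
      have : (a : X) = (b : X) := by
        have := sub_eq_zero.mp h4
        exact this
      exact Subtype.ext this
    · rintro ⟨c, hc⟩
      obtain ⟨f, hf, hfc⟩ := hc
      exact ⟨⟨f, hf⟩, Subtype.ext hfc⟩
  set e : S₀ ≃ₗ[ℝ] M₀ := LinearEquiv.ofBijective G₀ hG₀bij with he
  obtain ⟨Q, hQ⟩ := Submodule.exists_isCompl M₀
  set P : (ℕ → ℝ) →ₗ[ℝ] M₀ := M₀.linearProjOfIsCompl Q hQ with hP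
  set V : (ℕ → ℝ) →ₗ[ℝ] X := S₀.subtype ∘ₗ e.symm.toLinearMap ∘ₗ P with hV
  -- key property: V inverts G on S 0
  have hVG : ∀ f ∈ S 0, V (G f) = f := by
    intro f hf
    have hmem : G f ∈ M₀ := Submodule.mem_map_of_mem (hS₀mem f |>.mpr hf)
    have h1 : P (G f) = ⟨G f, hmem⟩ := Submodule.linearProjOfIsCompl_apply_left hQ ⟨G f, hmem⟩
    have h2 : e ⟨f, hf⟩ = ⟨G f, hmem⟩ := rfl
    have h3 : e.symm ⟨G f, hmem⟩ = ⟨f, hf⟩ := by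
      rw [← h2, LinearEquiv.symm_apply_apply]
    simp only [hV, LinearMap.comp_apply, h1, LinearEquiv.coe_toLinearMap, h3,
      Submodule.coe_subtype]
  -- for c in the image of S s, V c is an S s preimage
  have hVs : ∀ s, ∀ c ∈ imageSeq g (S s), V c ∈ S s ∧ c = fun i => g i (V c) := by
    rintro s c ⟨f, hf, rfl⟩
    have hf0 : f ∈ S 0 := hsub0 s hf
    have h1 : (fun i => g i f) = G f := rfl
    rw [h1, hVG f hf0]
    exact ⟨hf, rfl⟩
  -- the norms
  refine ⟨fun s c => N s (V c), ?_, ?_, ?_, ?_, ?_, ?_, ?_, ?_⟩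
  · -- NΘ s (g f) = N s f
    intro s f hf
    show N s (V (G f)) = N s f
    rw [hVG f (hsub0 s hf)]
  · -- BK property of each Θ_s
    intro s
    obtain ⟨⟨hz, hadd, hsmul, hnn, hdef, htri, hhom⟩, hcomp⟩ := (hBanS s).imp id id
    constructor
    · constructor
      · refine ⟨⟨0, hz, by funext i; simp⟩, ?_, ?_, ?_, ?_, ?_, ?_⟩
        · rintro c ⟨f, hf, rfl⟩ d ⟨f', hf', rfl⟩
          exact ⟨f + f', hadd f hf f' hf', by funext i; simp⟩
        · rintro a c ⟨f, hf, rfl⟩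
          exact ⟨a • f, hsmul a f hf, by funext i; simp⟩
        · intro c hc
          exact hnn _ (hVs s c hc).1
        · intro c hc hNc
          have h1 := hdef _ (hVs s c hc).1 hNc
          rw [(hVs s c hc).2, h1]
          funext i; simp
        · intro c hc d hd
          show N s (V (c + d)) ≤ N s (V c) + N s (V d)
          rw [map_add]
          exact htri _ (hVs s c hc).1 _ (hVs s d hd).1
        · intro a c hc
          show N s (V (a • c)) = |a| * N s (V c)
          rw [map_smul]
          exact hhom a _ (hVs s c hc).1
      · -- completeness
        intro u hu hcau
        have hw : ∀ n, V (u n) ∈ S s := fun n => (hVs s (u n) (hu n)).1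
        have hcau' : ∀ ε > 0, ∃ M, ∀ m ≥ M, ∀ n ≥ M,
            N s (V (u m) - V (u n)) < ε := by
          intro ε hε
          obtain ⟨M, hM⟩ := hcau ε hε
          exact ⟨M, fun m hm n hn => by
            have h5 : N s (V (u m - u n)) < ε := hM m hm n hn
            rwa [map_sub] at h5⟩
        obtain ⟨x, hx, hxlim⟩ := hcomp (fun n => V (u n)) hw hcau'
        refine ⟨fun i => g i x, ⟨x, hx, rfl⟩, ?_⟩
        have hVx : V (fun i => g i x) = x := hVG x (hsub0 s hx)
        have : ∀ n, N s (V (u n - fun i => g i x)) = N s (V (u n) - x) := by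
          intro n; rw [map_sub, hVx]
        simpa only [this] using hxlim
    · -- coordinate functionals
      intro i
      obtain ⟨C, hC⟩ := hgc i
      refine ⟨max C 0, ?_⟩
      intro c hc
      obtain ⟨hVc, hceq⟩ := hVs s c hc
      have h0 : V c ∈ S 0 := hsub0 s hVc
      have h1 : |c i| = |g i (V c)| := by rw [congrFun hceq i]
      have h2 : |g i (V c)| ≤ C * N 0 (V c) := hC (V c) h0
      have h3 : C * N 0 (V c) ≤ max C 0 * N 0 (V c) :=
        mul_le_mul_of_nonneg_right (le_max_left C 0) ((hBanS 0).1.2.2.2.1 _ h0)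
      have h4 : max C 0 * N 0 (V c) ≤ max C 0 * N s (V c) :=
        mul_le_mul_of_nonneg_left (hNmono0 s _ hVc) (le_max_right C 0)
      calc |c i| = |g i (V c)| := h1
        _ ≤ C * N 0 (V c) := h2
        _ ≤ max C 0 * N 0 (V c) := h3
        _ ≤ max C 0 * N s (V c) := h4
  · -- inclusions
    rintro s c ⟨f, hf, rfl⟩
    exact ⟨f, hdec s hf, rfl⟩
  · -- norms increase
    intro s c hc
    exact hmono s (V c) (hVs (s+1) c hc).1
  · -- intersection
    ext c
    simp only [Set.mem_iInter]
    constructor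
    · intro hc
      refine ⟨V c, ?_, (hVs 0 c (hc 0)).2⟩
      simp only [Set.mem_iInter]
      exact fun s => (hVs s c (hc s)).1
    · rintro ⟨f, hf, rfl⟩ s
      exact ⟨f, Set.mem_iInter.mp hf s, rfl⟩
  · -- density
    intro s c hc ε hε
    obtain ⟨hVc, hceq⟩ := hVs s c hc
    obtain ⟨h, hh, hhε⟩ := hdense s (V c) hVc ε hε
    have hh0 : h ∈ S 0 := hsub0 0 (Set.mem_iInter.mp hh 0)
    refine ⟨fun i => g i h, ⟨h, hh, rfl⟩, ?_⟩
    have hVh : V (fun i => g i h) = h := hVG h hh0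
    show N s (V (c - fun i => g i h)) < ε
    rw [map_sub, hVh]
    exact hhε
  · -- frame bounds
    intro s f hf
    have hfs : f ∈ S s := Set.mem_iInter.mp hf s
    show 1 * N s f ≤ N s (V (G f)) ∧ N s (V (G f)) ≤ 1 * N s f
    rw [hVG f (hsub0 s hfs)]
    constructor <;> simp
  · -- the synthesis operator
    refine ⟨V, ?_, ?_, ?_⟩
    · intro c hc
      simp only [Set.mem_iInter] at hc ⊢
      exact fun s => (hVs s c (hc s)).1
    · intro s
      exact ⟨1, fun c hc => by simp⟩
    · intro f hf
      exact hVG f (hsub0 0 (Set.mem_iInter.mp hf 0))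
end
end

section
/- Let Θ ≠ {0} be a solid BK-space, X ≠ {0} a reflexive Banach space, {g_i} ⊂ X* a Θ-Bessel sequence for X with bound B ≤ 1 and 0 < ‖g_i‖ ≤ 1 for all i. For c ∈ Θ set M^c := {f ∈ X : |c_i| ≤ |g_i(f)| for all i}, Θ̃ := {c ∈ Θ : M^c ≠ ∅}, ‖c‖_Θ̃ := inf{‖f‖ : f ∈ M^c}. Assume (A₁): for all c, d ∈ Θ̃, f ∈ M^c, h ∈ M^d there exists r ∈ M^{c+d} with ‖r‖ ≤ ‖f‖ + ‖h‖. Then Θ̃ is a solid BK-space with ‖·‖_Θ ≤ ‖·‖_Θ̃ containing all canonical vectors, and {g_i} is a Θ̃-Bessel sequence for X with bound 1. -/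
open Filter Topology

noncomputable section

/-- For a bounded sequence in a reflexive space, there is a weak limit along a fixed
ultrafilter. -/
lemma exists_weak_lim {X : Type*} [NormedAddCommGroup X] [NormedSpace ℝ X]
    (hXrefl : Function.Surjective (NormedSpace.inclusionInDoubleDual ℝ X))
    (U : Ultrafilter ℕ) (f : ℕ → X) (R : ℝ) (hR : 0 ≤ R) (hf : ∀ n, ‖f n‖ ≤ R) :
    ∃ h : X, ‖h‖ ≤ R ∧ ∀ ψ : X →L[ℝ] ℝ, Tendsto (fun n => ψ (f n)) U (nhds (ψ h)) := by
  have key : ∀ ψ : X →L[ℝ] ℝ, ∃ a : ℝ, Tendsto (fun n => ψ (f n)) U (nhds a) := by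
    intro ψ
    have hmem : ∀ n, ψ (f n) ∈ Set.Icc (-(‖ψ‖ * R)) (‖ψ‖ * R) := by
      intro n
      have h1 : |ψ (f n)| ≤ ‖ψ‖ * R := by
        calc |ψ (f n)| = ‖ψ (f n)‖ := (Real.norm_eq_abs _).symm
        _ ≤ ‖ψ‖ * ‖f n‖ := ψ.le_opNorm _
        _ ≤ ‖ψ‖ * R := mul_le_mul_of_nonneg_left (hf n) (norm_nonneg _)
      exact Set.mem_Icc.mpr (abs_le.mp h1)
    have hle : ↑(U.map fun n => ψ (f n)) ≤
        Filter.principal (Set.Icc (-(‖ψ‖ * R)) (‖ψ‖ * R)) := by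
      rw [Ultrafilter.coe_map, Filter.le_principal_iff]
      exact Filter.mem_map.mpr (Filter.univ_mem' hmem)
    obtain ⟨a, -, ha⟩ := isCompact_Icc.ultrafilter_le_nhds _ hle
    refine ⟨a, ?_⟩
    rw [Ultrafilter.coe_map] at ha
    exact ha
  choose L hL using key
  have Ladd : ∀ ψ₁ ψ₂ : X →L[ℝ] ℝ, L (ψ₁ + ψ₂) = L ψ₁ + L ψ₂ := by
    intro ψ₁ ψ₂
    have h1 : Tendsto (fun n => ψ₁ (f n) + ψ₂ (f n)) (U : Filter ℕ)
        (nhds (L (ψ₁ + ψ₂))) := by simpa using hL (ψ₁ + ψ₂)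
    exact tendsto_nhds_unique h1 ((hL ψ₁).add (hL ψ₂))
  have Lsmul : ∀ (a : ℝ) (ψ : X →L[ℝ] ℝ), L (a • ψ) = a * L ψ := by
    intro a ψ
    have h1 : Tendsto (fun n => a * ψ (f n)) (U : Filter ℕ)
        (nhds (L (a • ψ))) := by simpa using hL (a • ψ)
    exact tendsto_nhds_unique h1 ((hL ψ).const_mul a)
  have Lbound : ∀ ψ : X →L[ℝ] ℝ, ‖L ψ‖ ≤ R * ‖ψ‖ := by
    intro ψ
    have h1 : Tendsto (fun n => |ψ (f n)|) (U : Filter ℕ) (nhds |L ψ|) := (hL ψ).abs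
    have h2 : |L ψ| ≤ ‖ψ‖ * R := by
      refine le_of_tendsto h1 (Filter.Eventually.of_forall fun n => ?_)
      calc |ψ (f n)| = ‖ψ (f n)‖ := (Real.norm_eq_abs _).symm
      _ ≤ ‖ψ‖ * ‖f n‖ := ψ.le_opNorm _
      _ ≤ ‖ψ‖ * R := mul_le_mul_of_nonneg_left (hf n) (norm_nonneg _)
    rw [Real.norm_eq_abs]
    linarith [h2]
  let Φ : (X →L[ℝ] ℝ) →ₗ[ℝ] ℝ :=
    { toFun := L, map_add' := Ladd, map_smul' := Lsmul }
  let Φc : StrongDual ℝ (StrongDual ℝ X) := Φ.mkContinuous R Lbound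
  obtain ⟨h, hh⟩ := hXrefl Φc
  have happly : ∀ ψ : X →L[ℝ] ℝ, ψ h = L ψ := by
    intro ψ
    have h1 : NormedSpace.inclusionInDoubleDual ℝ X h ψ = ψ h :=
      NormedSpace.dual_def ℝ X h ψ
    rw [hh] at h1
    exact h1.symm
  refine ⟨h, ?_, fun ψ => ?_⟩
  · refine NormedSpace.norm_le_dual_bound ℝ h hR fun φ => ?_
    rw [happly φ]
    exact Lbound φ
  · rw [happly ψ]
    exact hL ψ

/-- for a solid BK-space `Θ = (S, N)`, a reflexive Banach space `X`, and a
`Θ`-Bessel sequence `(g i)` with bound `B ≤ 1`, `0 < ‖g i‖ ≤ 1`, assuming `(𝒜₁)`, the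
space `Θ̃ = {c ∈ Θ : M^c ≠ ∅}` with `‖c‖_Θ̃ = inf {‖f‖ : f ∈ M^c}` is a solid BK-space
containing the canonical vectors, `‖·‖_Θ ≤ ‖·‖_Θ̃`, and `(g i)` is a `Θ̃`-Bessel
sequence for `X` with bound `1`. -/
theorem tilde_theta_is_solid_BK
    {X : Type*} [NormedAddCommGroup X] [NormedSpace ℝ X] [CompleteSpace X]
    [Nontrivial X]
    (hXrefl : Function.Surjective (NormedSpace.inclusionInDoubleDual ℝ X))
    (S : Set (ℕ → ℝ)) (N : (ℕ → ℝ) → ℝ) (hBK : IsBKOn S N)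
    (hSne : S ≠ {0})
    (hsolid : ∀ c ∈ S, ∀ d : ℕ → ℝ, (∀ i, |d i| ≤ |c i|) → d ∈ S ∧ N d ≤ N c)
    (g : ℕ → X →L[ℝ] ℝ) (hg : ∀ i, 0 < ‖g i‖ ∧ ‖g i‖ ≤ 1)
    (B : ℝ) (hB : B ≤ 1)
    (hBessel : ∀ f : X, (fun i => g i f) ∈ S ∧ N (fun i => g i f) ≤ B * ‖f‖)
    (Θt : Set (ℕ → ℝ))
    (hΘt : Θt = {c | c ∈ S ∧ ∃ f : X, ∀ i, |c i| ≤ |g i f|})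
    (Nt : (ℕ → ℝ) → ℝ)
    (hNt : ∀ c, Nt c = sInf {r | ∃ f : X, (∀ i, |c i| ≤ |g i f|) ∧ r = ‖f‖})
    (hA1 : ∀ c ∈ Θt, ∀ d ∈ Θt, ∀ f : X, (∀ i, |c i| ≤ |g i f|) →
      ∀ h : X, (∀ i, |d i| ≤ |g i h|) →
      ∃ r : X, (∀ i, |c i + d i| ≤ |g i r|) ∧ ‖r‖ ≤ ‖f‖ + ‖h‖) :
    IsBKOn Θt Nt ∧
    (∀ c ∈ Θt, ∀ d : ℕ → ℝ, (∀ i, |d i| ≤ |c i|) → d ∈ Θt ∧ Nt d ≤ Nt c) ∧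
    (∀ i, Pi.single i (1 : ℝ) ∈ Θt) ∧
    (∀ c ∈ Θt, N c ≤ Nt c) ∧
    (∀ f : X, (fun i => g i f) ∈ Θt ∧ Nt (fun i => g i f) ≤ 1 * ‖f‖) := by
  obtain ⟨⟨⟨hS0, hSadd, hSsmul, hN0, hNdef, hNtri, hNhom⟩, hScompl⟩, hScoord⟩ := hBK
  have hmem : ∀ c : ℕ → ℝ, c ∈ Θt ↔ c ∈ S ∧ ∃ f : X, ∀ i, |c i| ≤ |g i f| := by
    intro c; rw [hΘt]; exact Iff.rfl
  have habs : ∀ (c : ℕ → ℝ) (f : X), (∀ i, |c i| ≤ |g i f|) → ∀ i, |c i| ≤ ‖f‖ := by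
    intro c f hf i
    calc |c i| ≤ |g i f| := hf i
    _ = ‖g i f‖ := (Real.norm_eq_abs _).symm
    _ ≤ ‖g i‖ * ‖f‖ := (g i).le_opNorm f
    _ ≤ 1 * ‖f‖ := mul_le_mul_of_nonneg_right (hg i).2 (norm_nonneg f)
    _ = ‖f‖ := one_mul _
  have hTnonE : ∀ (c : ℕ → ℝ) (f : X), (∀ i, |c i| ≤ |g i f|) →
      {r | ∃ f : X, (∀ i, |c i| ≤ |g i f|) ∧ r = ‖f‖}.Nonempty :=
    fun c f hf => ⟨‖f‖, f, hf, rfl⟩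
  have hTbdd : ∀ c : ℕ → ℝ, BddBelow {r | ∃ f : X, (∀ i, |c i| ≤ |g i f|) ∧ r = ‖f‖} := by
    intro c
    refine ⟨0, ?_⟩
    rintro r ⟨f, -, rfl⟩
    exact norm_nonneg f
  have hNtle : ∀ (c : ℕ → ℝ) (f : X), (∀ i, |c i| ≤ |g i f|) → Nt c ≤ ‖f‖ := by
    intro c f hf
    rw [hNt]
    exact csInf_le (hTbdd c) ⟨f, hf, rfl⟩
  have hge : ∀ (c : ℕ → ℝ) (f₀ : X), (∀ i, |c i| ≤ |g i f₀|) → ∀ i, |c i| ≤ Nt c := by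
    intro c f₀ h₀ i
    rw [hNt]
    refine le_csInf (hTnonE c f₀ h₀) ?_
    rintro r ⟨f, hf, rfl⟩
    exact habs c f hf i
  have hNtnonneg : ∀ (c : ℕ → ℝ) (f₀ : X), (∀ i, |c i| ≤ |g i f₀|) → 0 ≤ Nt c := by
    intro c f₀ h₀
    rw [hNt]
    refine le_csInf (hTnonE c f₀ h₀) ?_
    rintro r ⟨f, hf, rfl⟩
    exact norm_nonneg f
  have hNle : ∀ c ∈ Θt, N c ≤ Nt c := by
    intro c hc
    obtain ⟨hcS, f₀, hf₀⟩ := (hmem c).mp hc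
    rw [hNt]
    refine le_csInf (hTnonE c f₀ hf₀) ?_
    rintro r ⟨f, hf, rfl⟩
    have h1 := (hsolid _ (hBessel f).1 c fun i => hf i).2
    calc N c ≤ N (fun i => g i f) := h1
    _ ≤ B * ‖f‖ := (hBessel f).2
    _ ≤ 1 * ‖f‖ := mul_le_mul_of_nonneg_right hB (norm_nonneg f)
    _ = ‖f‖ := one_mul _
  have h0Θ : (0 : ℕ → ℝ) ∈ Θt := (hmem 0).mpr ⟨hS0, 0, fun i => by simp⟩
  have hadd : ∀ c ∈ Θt, ∀ d ∈ Θt, c + d ∈ Θt := by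
    intro c hc d hd
    obtain ⟨hcS, f, hf⟩ := (hmem c).mp hc
    obtain ⟨hdS, h, hh⟩ := (hmem d).mp hd
    obtain ⟨r, hr, -⟩ := hA1 c hc d hd f hf h hh
    exact (hmem _).mpr ⟨hSadd c hcS d hdS, r, fun i => by simpa using hr i⟩
  have hsmulW : ∀ (a : ℝ) (c : ℕ → ℝ) (f : X), (∀ i, |c i| ≤ |g i f|) →
      ∀ i, |(a • c) i| ≤ |g i (a • f)| := by
    intro a c f hf i
    simp only [Pi.smul_apply, smul_eq_mul, map_smul, abs_mul]
    exact mul_le_mul_of_nonneg_left (hf i) (abs_nonneg a)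
  have hsmulΘ : ∀ (a : ℝ), ∀ c ∈ Θt, a • c ∈ Θt := by
    intro a c hc
    obtain ⟨hcS, f, hf⟩ := (hmem c).mp hc
    exact (hmem _).mpr ⟨hSsmul a c hcS, a • f, hsmulW a c f hf⟩
  have htri : ∀ c ∈ Θt, ∀ d ∈ Θt, Nt (c + d) ≤ Nt c + Nt d := by
    intro c hc d hd
    obtain ⟨hcS, f₀, hf₀⟩ := (hmem c).mp hc
    obtain ⟨hdS, h₀, hh₀⟩ := (hmem d).mp hd
    have step : ∀ h : X, (∀ i, |d i| ≤ |g i h|) → Nt (c + d) - Nt c ≤ ‖h‖ := by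
      intro h hh
      have step2 : ∀ f : X, (∀ i, |c i| ≤ |g i f|) → Nt (c + d) - ‖h‖ ≤ ‖f‖ := by
        intro f hf
        obtain ⟨r, hr, hrn⟩ := hA1 c hc d hd f hf h hh
        have h3 := hNtle (c + d) r (fun i => by simpa using hr i)
        linarith
      have h4 : Nt (c + d) - ‖h‖ ≤ Nt c := by
        rw [hNt c]
        refine le_csInf (hTnonE c f₀ hf₀) ?_
        rintro r ⟨f, hf, rfl⟩
        exact step2 f hf
      linarith
    have h5 : Nt (c + d) - Nt c ≤ Nt d := by
      rw [hNt d]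
      refine le_csInf (hTnonE d h₀ hh₀) ?_
      rintro r ⟨h, hh, rfl⟩
      exact step h hh
    linarith
  have hNt0 : Nt 0 = 0 := by
    refine le_antisymm ?_ (hNtnonneg 0 0 (fun i => by simp))
    have := hNtle 0 0 (fun i => by simp)
    simpa using this
  have hhomle : ∀ (a : ℝ), ∀ c ∈ Θt, Nt (a • c) ≤ |a| * Nt c := by
    intro a c hc
    obtain ⟨hcS, f₀, hf₀⟩ := (hmem c).mp hc
    rcases eq_or_ne a 0 with rfl | ha
    · rw [zero_smul, abs_zero, zero_mul, hNt0]
    · have hapos : 0 < |a| := abs_pos.mpr ha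
      rw [hNt c, ← div_le_iff₀' hapos]
      refine le_csInf (hTnonE c f₀ hf₀) ?_
      rintro r ⟨f, hf, rfl⟩
      rw [div_le_iff₀' hapos]
      have h1 := hNtle (a • c) (a • f) (hsmulW a c f hf)
      rwa [norm_smul, Real.norm_eq_abs] at h1
  have hhom : ∀ (a : ℝ), ∀ c ∈ Θt, Nt (a • c) = |a| * Nt c := by
    intro a c hc
    rcases eq_or_ne a 0 with rfl | ha
    · rw [zero_smul, abs_zero, zero_mul, hNt0]
    · refine le_antisymm (hhomle a c hc) ?_
      have h1 := hhomle a⁻¹ (a • c) (hsmulΘ a c hc)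
      rw [smul_smul, inv_mul_cancel₀ ha, one_smul, abs_inv] at h1
      have hapos : 0 < |a| := abs_pos.mpr ha
      calc |a| * Nt c ≤ |a| * (|a|⁻¹ * Nt (a • c)) :=
        mul_le_mul_of_nonneg_left h1 (le_of_lt hapos)
      _ = Nt (a • c) := by field_simp
  have hNtdef : ∀ c ∈ Θt, Nt c = 0 → c = 0 := by
    intro c hc h0
    obtain ⟨hcS, f₀, hf₀⟩ := (hmem c).mp hc
    funext i
    have h1 := hge c f₀ hf₀ i
    rw [h0] at h1
    have h2 : c i = 0 := abs_nonpos_iff.mp h1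
    simpa using h2
  have hsolidΘ : ∀ c ∈ Θt, ∀ d : ℕ → ℝ, (∀ i, |d i| ≤ |c i|) → d ∈ Θt ∧ Nt d ≤ Nt c := by
    intro c hc d hdc
    obtain ⟨hcS, f₀, hf₀⟩ := (hmem c).mp hc
    have hdw : ∀ f : X, (∀ i, |c i| ≤ |g i f|) → ∀ i, |d i| ≤ |g i f| :=
      fun f hf i => le_trans (hdc i) (hf i)
    refine ⟨(hmem d).mpr ⟨(hsolid c hcS d hdc).1, f₀, hdw f₀ hf₀⟩, ?_⟩
    rw [hNt c]
    refine le_csInf (hTnonE c f₀ hf₀) ?_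
    rintro r ⟨f, hf, rfl⟩
    exact hNtle d f (hdw f hf)
  have hsingle : ∀ i, Pi.single i (1 : ℝ) ∈ Θt := by
    intro i
    have hne : g i ≠ 0 := by
      intro hzero
      have := (hg i).1
      rw [hzero, norm_zero] at this
      exact lt_irrefl 0 this
    obtain ⟨x, hx⟩ : ∃ x, g i x ≠ 0 := by
      by_contra hcon
      push_neg at hcon
      apply hne
      ext y
      simpa using hcon y
    set f := (g i x)⁻¹ • x with hfdef
    have hgif : g i f = 1 := by
      rw [hfdef, map_smul, smul_eq_mul, inv_mul_cancel₀ hx]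
    have hw : ∀ j, |(Pi.single i (1 : ℝ) : ℕ → ℝ) j| ≤ |g j f| := by
      intro j
      rcases eq_or_ne j i with rfl | hne'
      · simp [hgif]
      · rw [Pi.single_eq_of_ne hne']
        simp
    refine (hmem _).mpr ⟨?_, f, hw⟩
    exact (hsolid _ (hBessel f).1 _ (fun j => hw j)).1
  have hBessel1 : ∀ f : X, (fun i => g i f) ∈ Θt ∧ Nt (fun i => g i f) ≤ 1 * ‖f‖ := by
    intro f
    refine ⟨(hmem _).mpr ⟨(hBessel f).1, f, fun i => le_refl _⟩, ?_⟩
    rw [one_mul]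
    exact hNtle _ f (fun i => le_refl _)
  -- completeness
  have hcompl : ∀ u : ℕ → (ℕ → ℝ), (∀ n, u n ∈ Θt) →
      (∀ ε > 0, ∃ M, ∀ m ≥ M, ∀ n ≥ M, Nt (u m - u n) < ε) →
      ∃ x ∈ Θt, Tendsto (fun n => Nt (u n - x)) atTop (nhds 0) := by
    intro u hu hcau
    have hsub : ∀ m n, u m - u n ∈ Θt := by
      intro m n
      have he : u m - u n = u m + (-1 : ℝ) • u n := by
        ext i; simp; ring
      rw [he]
      exact hadd _ (hu m) _ (hsmulΘ (-1) _ (hu n))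
    have hcauN : ∀ ε > 0, ∃ M, ∀ m ≥ M, ∀ n ≥ M, N (u m - u n) < ε := by
      intro ε hε
      obtain ⟨M, hM⟩ := hcau ε hε
      exact ⟨M, fun m hm n hn => lt_of_le_of_lt (hNle _ (hsub m n)) (hM m hm n hn)⟩
    obtain ⟨c, hcS, hconvN⟩ := hScompl u (fun n => ((hmem _).mp (hu n)).1) hcauN
    have hSsubc : ∀ n, u n - c ∈ S := by
      intro n
      have he : u n - c = u n + (-1 : ℝ) • c := by
        ext j; simp; ring
      rw [he]
      exact hSadd _ ((hmem _).mp (hu n)).1 _ (hSsmul (-1) c hcS)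
    have hcoordconv : ∀ i, Tendsto (fun n => u n i) atTop (nhds (c i)) := by
      intro i
      obtain ⟨K, hK⟩ := hScoord i
      have hb : ∀ n, ‖u n i - c i‖ ≤ K * N (u n - c) := by
        intro n
        have := hK (u n - c) (hSsubc n)
        simpa [Real.norm_eq_abs] using this
      have hlim : Tendsto (fun n => K * N (u n - c)) atTop (nhds 0) := by
        have := hconvN.const_mul K
        simpa using this
      have hz : Tendsto (fun n => u n i - c i) atTop (nhds 0) :=
        squeeze_zero_norm hb hlim
      exact tendsto_sub_nhds_zero_iff.mp hz
    set U : Ultrafilter ℕ := Ultrafilter.of atTop with hUdef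
    have hUle : (U : Filter ℕ) ≤ atTop := Ultrafilter.of_le atTop
    have key : ∀ ε > 0, ∃ M, ∀ n ≥ M, ∃ h : X,
        (∀ i, |u n i - c i| ≤ |g i h|) ∧ ‖h‖ ≤ ε := by
      intro ε hε
      obtain ⟨M, hM⟩ := hcau (ε / 2) (by linarith)
      refine ⟨M, fun n hn => ?_⟩
      have hex : ∀ m, ∃ fm : X,
          (m ≥ M → ∀ i, |u m i - u n i| ≤ |g i fm|) ∧ ‖fm‖ ≤ ε := by
        intro m
        by_cases hm : m ≥ M
        · obtain ⟨hS', f₀, hf₀⟩ := (hmem _).mp (hsub m n)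
          obtain ⟨r, hrmem, hrlt⟩ :=
            Real.lt_sInf_add_pos (hTnonE _ f₀ hf₀) (by linarith : (0 : ℝ) < ε / 2)
          obtain ⟨fm, hfm, rfl⟩ := hrmem
          refine ⟨fm, fun _ i => by simpa using hfm i, ?_⟩
          have h2 := hM m hm n hn
          rw [← hNt (u m - u n)] at hrlt
          linarith
        · exact ⟨0, fun hc' => absurd hc' hm, by simp; linarith⟩
      choose fm hfm1 hfm2 using hex
      obtain ⟨h, hhn, hhlim⟩ := exists_weak_lim hXrefl U fm ε (le_of_lt hε) hfm2
      refine ⟨h, ?_, hhn⟩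
      intro i
      have t1 : Tendsto (fun m => u m i - u n i) (U : Filter ℕ) (nhds (c i - u n i)) :=
        ((hcoordconv i).mono_left hUle).sub tendsto_const_nhds
      have t2 : Tendsto (fun m => g i (fm m)) (U : Filter ℕ) (nhds (g i h)) := hhlim (g i)
      have hev : ∀ᶠ m in (U : Filter ℕ), |u m i - u n i| ≤ |g i (fm m)| := by
        apply Filter.Eventually.filter_mono hUle
        filter_upwards [Filter.eventually_ge_atTop M] with m hm
        exact hfm1 m hm i
      have h6 := le_of_tendsto_of_tendsto t1.abs t2.abs hev
      simpa [abs_sub_comm] using h6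
    obtain ⟨M₀, hM₀⟩ := key 1 one_pos
    obtain ⟨h₀, hh₀, -⟩ := hM₀ M₀ le_rfl
    have hsubΘ : c - u M₀ ∈ Θt := by
      refine (hmem _).mpr ⟨?_, h₀, fun i => by simpa [abs_sub_comm] using hh₀ i⟩
      have he : c - u M₀ = c + (-1 : ℝ) • u M₀ := by
        ext j; simp; ring
      rw [he]
      exact hSadd _ hcS _ (hSsmul (-1) _ ((hmem _).mp (hu M₀)).1)
    have hcΘ : c ∈ Θt := by
      have he : c = (c - u M₀) + u M₀ := by
        ext j; simp
      rw [he]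
      exact hadd _ hsubΘ _ (hu M₀)
    refine ⟨c, hcΘ, ?_⟩
    rw [Metric.tendsto_atTop]
    intro ε hε
    obtain ⟨M, hM⟩ := key (ε / 2) (by linarith)
    refine ⟨M, fun n hn => ?_⟩
    obtain ⟨h, hh, hhn⟩ := hM n hn
    have hw : ∀ i, |(u n - c) i| ≤ |g i h| := fun i => by simpa using hh i
    have h1 : Nt (u n - c) ≤ ε / 2 := le_trans (hNtle _ h hw) hhn
    have h2 : 0 ≤ Nt (u n - c) := hNtnonneg _ h hw
    rw [Real.dist_eq, sub_zero, abs_of_nonneg h2]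
    linarith
  have hNtnonneg' : ∀ c ∈ Θt, 0 ≤ Nt c := by
    intro c hc
    obtain ⟨-, f₀, hf₀⟩ := (hmem c).mp hc
    exact hNtnonneg c f₀ hf₀
  have hcoordBK : ∀ i, ∃ K : ℝ, ∀ c ∈ Θt, |c i| ≤ K * Nt c := by
    intro i
    refine ⟨1, fun c hc => ?_⟩
    obtain ⟨-, f₀, hf₀⟩ := (hmem c).mp hc
    rw [one_mul]
    exact hge c f₀ hf₀ i
  exact ⟨⟨⟨⟨h0Θ, hadd, hsmulΘ, hNtnonneg', hNtdef, htri, hhom⟩, hcompl⟩, hcoordBK⟩,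
    hsolidΘ, hsingle, hNle, hBessel1⟩
end
end

section
/- In the setting of the Θ̃ construction (solid BK-space Θ, reflexive Banach X, Θ-Bessel sequence {g_i} with bound ≤ 1, ‖g_i‖ ≤ 1, condition (A₁) holding): if {g_i} is moreover a Θ-frame for X with lower bound A, then {g_i} is a Θ̃-frame for X; and if {g_i} is a Banach frame for X with respect to Θ (i.e., there is a bounded V : Θ → X with V({g_i(f)}) = f), then {g_i} is a Banach frame for X with respect to Θ̃. -/
open Filter Topology

noncomputable section

/-- in the `Θ̃` construction (solid BK `Θ`, reflexive `X`, Bessel bound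
`≤ 1`, `‖g i‖ ≤ 1`, condition `(𝒜₁)`): if `(g i)` is a `Θ`-frame with lower bound `A`,
then it is a `Θ̃`-frame; and if it is a Banach frame for `X` w.r.t. `Θ`, then it is a
Banach frame for `X` w.r.t. `Θ̃`. -/
theorem tilde_theta_frame_and_banach_frame
    {X : Type*} [NormedAddCommGroup X] [NormedSpace ℝ X] [CompleteSpace X]
    [Nontrivial X]
    (hXrefl : Function.Surjective (NormedSpace.inclusionInDoubleDual ℝ X))
    (S : Set (ℕ → ℝ)) (N : (ℕ → ℝ) → ℝ) (hBK : IsBKOn S N)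
    (hSne : S ≠ {0})
    (hsolid : ∀ c ∈ S, ∀ d : ℕ → ℝ, (∀ i, |d i| ≤ |c i|) → d ∈ S ∧ N d ≤ N c)
    (g : ℕ → X →L[ℝ] ℝ) (hg : ∀ i, 0 < ‖g i‖ ∧ ‖g i‖ ≤ 1)
    (B : ℝ) (hB : B ≤ 1)
    (hBessel : ∀ f : X, (fun i => g i f) ∈ S ∧ N (fun i => g i f) ≤ B * ‖f‖)
    (Θt : Set (ℕ → ℝ))
    (hΘt : Θt = {c | c ∈ S ∧ ∃ f : X, ∀ i, |c i| ≤ |g i f|})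
    (Nt : (ℕ → ℝ) → ℝ)
    (hNt : ∀ c, Nt c = sInf {r | ∃ f : X, (∀ i, |c i| ≤ |g i f|) ∧ r = ‖f‖})
    (hA1 : ∀ c ∈ Θt, ∀ d ∈ Θt, ∀ f : X, (∀ i, |c i| ≤ |g i f|) →
      ∀ h : X, (∀ i, |d i| ≤ |g i h|) →
      ∃ r : X, (∀ i, |c i + d i| ≤ |g i r|) ∧ ‖r‖ ≤ ‖f‖ + ‖h‖)
    (A : ℝ) (hA : 0 < A)
    (hlow : ∀ f : X, A * ‖f‖ ≤ N (fun i => g i f)) :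
    (∀ f : X, (fun i => g i f) ∈ Θt ∧
      A * ‖f‖ ≤ Nt (fun i => g i f) ∧ Nt (fun i => g i f) ≤ 1 * ‖f‖) ∧
    ((∃ V : (ℕ → ℝ) →ₗ[ℝ] X, (∃ K : ℝ, ∀ c ∈ S, ‖V c‖ ≤ K * N c) ∧
        ∀ f : X, V (fun i => g i f) = f) →
      (∃ V : (ℕ → ℝ) →ₗ[ℝ] X, (∃ K : ℝ, ∀ c ∈ Θt, ‖V c‖ ≤ K * Nt c) ∧
        ∀ f : X, V (fun i => g i f) = f)) := by
  have hNnonneg : ∀ c ∈ S, 0 ≤ N c := hBK.1.1.2.2.2.1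
  have key : ∀ (c : ℕ → ℝ) (f : X), (∀ i, |c i| ≤ |g i f|) → c ∈ S ∧ N c ≤ ‖f‖ := by
    intro c f hdom
    obtain ⟨hcS, hNc⟩ := hsolid _ (hBessel f).1 c hdom
    exact ⟨hcS, hNc.trans ((hBessel f).2.trans (by nlinarith [norm_nonneg f]))⟩
  constructor
  · intro f
    have hmem : (fun i => g i f) ∈ Θt := by
      rw [hΘt]; exact ⟨(hBessel f).1, f, fun i => le_refl _⟩
    refine ⟨hmem, ?_, ?_⟩
    · rw [hNt]
      have hne : {r | ∃ f' : X, (∀ i, |g i f| ≤ |g i f'|) ∧ r = ‖f'‖}.Nonempty :=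
        ⟨‖f‖, f, fun i => le_refl _, rfl⟩
      apply le_csInf hne
      rintro r ⟨f', hdom, rfl⟩
      have h1 : A * ‖f‖ ≤ N (fun i => g i f) := hlow f
      have h2 := (key _ f' hdom).2
      linarith
    · rw [hNt, one_mul]
      apply csInf_le
      · exact ⟨0, by rintro r ⟨f', _, rfl⟩; exact norm_nonneg _⟩
      · exact ⟨f, fun i => le_refl _, rfl⟩
  · rintro ⟨V, ⟨K, hK⟩, hV⟩
    refine ⟨V, ⟨max K 0 + 1, ?_⟩, hV⟩
    intro c hc
    rw [hΘt] at hc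
    obtain ⟨hcS, f0, hdom0⟩ := hc
    set K1 := max K 0 + 1 with hK1
    have hK1pos : 0 < K1 := by positivity
    have hVle : ∀ f : X, (∀ i, |c i| ≤ |g i f|) → ‖V c‖ ≤ K1 * ‖f‖ := by
      intro f hdom
      have h1 := hK c hcS
      have h2 := (key c f hdom).2
      have h3 := hNnonneg c hcS
      nlinarith [le_max_left K 0]
    rw [hNt]
    have hdiv : ‖V c‖ / K1 ≤ sInf {r | ∃ f : X, (∀ i, |c i| ≤ |g i f|) ∧ r = ‖f‖} := by
      have hne : {r | ∃ f : X, (∀ i, |c i| ≤ |g i f|) ∧ r = ‖f‖}.Nonempty :=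
        ⟨‖f0‖, f0, hdom0, rfl⟩
      apply le_csInf hne
      rintro r ⟨f', hdom, rfl⟩
      rw [div_le_iff₀ hK1pos]
      linarith [hVle f' hdom]
    calc ‖V c‖ = K1 * (‖V c‖ / K1) := by field_simp
    _ ≤ K1 * sInf {r | ∃ f : X, (∀ i, |c i| ≤ |g i f|) ∧ r = ‖f‖} :=
        mul_le_mul_of_nonneg_left hdiv hK1pos.le
end
end

section
/- With Θ̃ as in the construction above (all hypotheses including (A₁)): Θ̃ is a CB-space (the canonical vectors form a Schauder basis) if and only if (A₂) holds: for every c ∈ Θ̃ and every ε > 0 there exist k ∈ ℕ and f ∈ M^{c^{(k)}} with ‖f‖ < ε, where c^{(k)} := (0,…,0,c_{k+1},c_{k+2},…). -/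
open Filter Topology

noncomputable section

/-- with `Θ̃` as in the construction (all hypotheses including `(𝒜₁)`),
`Θ̃` is a CB-space (the canonical vectors form a Schauder basis, i.e. the tails
`c^{(n)}` tend to `0` in `‖·‖_Θ̃`) iff condition `(𝒜₂)` holds: for every `c ∈ Θ̃` and
`ε > 0` there are `k` and `f ∈ M^{c^{(k)}}` with `‖f‖ < ε`. -/
theorem tilde_theta_CB_iff_A2
    {X : Type*} [NormedAddCommGroup X] [NormedSpace ℝ X] [CompleteSpace X]
    [Nontrivial X]
    (hXrefl : Function.Surjective (NormedSpace.inclusionInDoubleDual ℝ X))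
    (S : Set (ℕ → ℝ)) (N : (ℕ → ℝ) → ℝ) (hBK : IsBKOn S N)
    (hSne : S ≠ {0})
    (hsolid : ∀ c ∈ S, ∀ d : ℕ → ℝ, (∀ i, |d i| ≤ |c i|) → d ∈ S ∧ N d ≤ N c)
    (g : ℕ → X →L[ℝ] ℝ) (hg : ∀ i, 0 < ‖g i‖ ∧ ‖g i‖ ≤ 1)
    (B : ℝ) (hB : B ≤ 1)
    (hBessel : ∀ f : X, (fun i => g i f) ∈ S ∧ N (fun i => g i f) ≤ B * ‖f‖)
    (Θt : Set (ℕ → ℝ))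
    (hΘt : Θt = {c | c ∈ S ∧ ∃ f : X, ∀ i, |c i| ≤ |g i f|})
    (Nt : (ℕ → ℝ) → ℝ)
    (hNt : ∀ c, Nt c = sInf {r | ∃ f : X, (∀ i, |c i| ≤ |g i f|) ∧ r = ‖f‖})
    (hA1 : ∀ c ∈ Θt, ∀ d ∈ Θt, ∀ f : X, (∀ i, |c i| ≤ |g i f|) →
      ∀ h : X, (∀ i, |d i| ≤ |g i h|) →
      ∃ r : X, (∀ i, |c i + d i| ≤ |g i r|) ∧ ‖r‖ ≤ ‖f‖ + ‖h‖) :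
    ((∀ i, Pi.single i (1 : ℝ) ∈ Θt) ∧
      ∀ c ∈ Θt,
        Tendsto (fun n => Nt (fun i => if i < n then 0 else c i)) atTop (nhds 0))
    ↔
    (∀ c ∈ Θt, ∀ ε > 0, ∃ k : ℕ, ∃ f : X,
      (∀ i, |if i < k then (0 : ℝ) else c i| ≤ |g i f|) ∧ ‖f‖ < ε) := by
  constructor
  · rintro ⟨-, htail⟩ c hc ε hε
    have h0 : ∀ n, 0 ≤ Nt (fun i => if i < n then 0 else c i) := by
      intro n
      rw [hNt]
      exact Real.sInf_nonneg (by rintro r ⟨f, -, rfl⟩; exact norm_nonneg f)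
    have ht := htail c hc
    rw [Metric.tendsto_atTop] at ht
    obtain ⟨M, hM⟩ := ht ε hε
    have hlt : Nt (fun i => if i < M then 0 else c i) < ε := by
      have := hM M le_rfl
      rwa [Real.dist_eq, sub_zero, abs_of_nonneg (h0 M)] at this
    rw [hNt] at hlt
    rw [hΘt] at hc
    obtain ⟨hcS, f0, hf0⟩ := hc
    have hne : ({r | ∃ f : X, (∀ i, |if i < M then (0:ℝ) else c i| ≤ |g i f|) ∧ r = ‖f‖}).Nonempty := by
      refine ⟨‖f0‖, f0, fun i => ?_, rfl⟩
      by_cases h : i < M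
      · simpa [h] using abs_nonneg ((g i) f0)
      · simpa [h] using hf0 i
    obtain ⟨r, ⟨f, hf, rfl⟩, hr⟩ := exists_lt_of_csInf_lt hne hlt
    exact ⟨M, f, hf, hr⟩
  · intro hA2
    constructor
    · intro i
      obtain ⟨hgi, -⟩ := hg i
      have hne : g i ≠ 0 := by
        intro h; rw [h] at hgi; simp at hgi
      obtain ⟨x, hx⟩ : ∃ x, g i x ≠ 0 := by
        by_contra h; push_neg at h
        exact hne (ContinuousLinearMap.ext fun x => by simp [h x])
      set f := (|g i x|)⁻¹ • x with hfdef
      have hgif : |g i f| = 1 := by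
        simp [hfdef, abs_mul, abs_inv, abs_abs,
          inv_mul_cancel₀ (abs_ne_zero.mpr hx)]
      have hdom : ∀ j, |(Pi.single i (1:ℝ) : ℕ → ℝ) j| ≤ |g j f| := by
        intro j
        rcases eq_or_ne j i with rfl | hij
        · simp [hgif]
        · simp [Pi.single_eq_of_ne hij]
      rw [hΘt]
      refine ⟨?_, f, hdom⟩
      exact (hsolid _ (hBessel f).1 _ (fun j => hdom j)).1
    · intro c hc
      rw [Metric.tendsto_atTop]
      intro ε hε
      obtain ⟨k, f, hf, hfε⟩ := hA2 c hc ε hε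
      refine ⟨k, fun n hn => ?_⟩
      have hdom : ∀ i, |if i < n then (0:ℝ) else c i| ≤ |g i f| := by
        intro i
        by_cases h : i < n
        · simpa [h] using abs_nonneg _
        · have h2 : ¬ i < k := fun hik => h (hik.trans_le hn)
          simpa [h, h2] using hf i
      have hle : Nt (fun i => if i < n then 0 else c i) ≤ ‖f‖ := by
        rw [hNt]
        exact csInf_le ⟨0, by rintro r ⟨f', -, rfl⟩; exact norm_nonneg f'⟩ ⟨f, hdom, rfl⟩
      have h0 : 0 ≤ Nt (fun i => if i < n then 0 else c i) := by
        rw [hNt]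
        exact Real.sInf_nonneg (by rintro r ⟨f', -, rfl⟩; exact norm_nonneg f')
      rw [Real.dist_eq, sub_zero, abs_of_nonneg h0]
      exact hle.trans_lt hfε
end
end

section
/- Let X be a Hilbert space with orthonormal basis {e_i}, g_1(f) = ⟨f,e_1⟩, g_i(f) = ⟨f,e_{i−1}⟩ for i ≥ 2, Θ = ℓ². For c ∈ ℓ² let M^c := {f ∈ X : |c_i| ≤ |g_i(f)| ∀i} and Θ̃ := {c ∈ ℓ² : M^c ≠ ∅} with ‖c‖_Θ̃ := inf{‖f‖ : f ∈ M^c}. Then condition (A₁) holds: for all c, d ∈ Θ̃ and all f ∈ M^c, h ∈ M^d there exists r ∈ M^{c+d} with ‖r‖ ≤ ‖f‖ + ‖h‖. -/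
open Filter Topology ENNReal

noncomputable section

/-- in the Hilbert-space example (`g i f = ⟨f, e (i-1)⟩` with the shifted
orthonormal basis functionals, `Θ = ℓ²`), condition `(𝒜₁)` holds for
`M^c := {f : |c i| ≤ |g i f| ∀ i}` and `Θ̃ := {c ∈ ℓ² : M^c ≠ ∅}`: for all `c, d ∈ Θ̃`
and `f ∈ M^c`, `h ∈ M^d` there is `r ∈ M^{c+d}` with `‖r‖ ≤ ‖f‖ + ‖h‖`. -/
theorem shifted_ONB_A1
    {X : Type*} [NormedAddCommGroup X] [InnerProductSpace ℝ X] [CompleteSpace X]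
    (b : HilbertBasis ℕ ℝ X)
    (g : ℕ → X → ℝ)
    (hg : ∀ i f, g i f = (b.repr f : ℕ → ℝ) (i - 1)) :
    ∀ c : ℕ → ℝ, Memℓp c 2 → ∀ d : ℕ → ℝ, Memℓp d 2 →
      ∀ f : X, (∀ i, |c i| ≤ |g i f|) →
      ∀ h : X, (∀ i, |d i| ≤ |g i h|) →
      ∃ r : X, (∀ i, |c i + d i| ≤ |g i r|) ∧ ‖r‖ ≤ ‖f‖ + ‖h‖ := by
  intro c hc d hd f hf h hh
  have hp2 : (0:ℝ) < (2 : ℝ≥0∞).toReal := by norm_num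
  set F : lp (fun _ : ℕ => ℝ) 2 := b.repr f with hF
  set H : lp (fun _ : ℕ => ℝ) 2 := b.repr h with hH
  set a : ℕ → ℝ := fun j =>
    if j = 0 then max |c 0 + d 0| |c 1 + d 1| else |c (j+1) + d (j+1)| with ha_def
  have ha_nonneg : ∀ j, 0 ≤ a j := by
    intro j
    simp only [ha_def]
    split
    · exact le_max_of_le_left (abs_nonneg _)
    · exact abs_nonneg _
  have key : ∀ j, |a j| ≤ |F j| + |H j| := by
    intro j
    rw [abs_of_nonneg (ha_nonneg j)]
    simp only [ha_def]
    split_ifs with hj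
    · apply max_le
      · calc |c 0 + d 0| ≤ |c 0| + |d 0| := abs_add_le _ _
          _ ≤ |F j| + |H j| := by
            subst hj
            have h1 := hf 0; have h2 := hh 0
            rw [hg 0 f] at h1; rw [hg 0 h] at h2
            exact add_le_add h1 h2
      · calc |c 1 + d 1| ≤ |c 1| + |d 1| := abs_add_le _ _
          _ ≤ |F j| + |H j| := by
            subst hj
            have h1 := hf 1; have h2 := hh 1
            rw [hg 1 f] at h1; rw [hg 1 h] at h2
            exact add_le_add h1 h2
    · calc |c (j+1) + d (j+1)| ≤ |c (j+1)| + |d (j+1)| := abs_add_le _ _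
        _ ≤ |F j| + |H j| := by
          have h1 := hf (j+1); have h2 := hh (j+1)
          rw [hg (j+1) f] at h1; rw [hg (j+1) h] at h2
          simpa using add_le_add h1 h2
  -- the sequences |F|, |H| are in ℓ²
  have hF' : Memℓp (fun j => |F j|) 2 := by
    rw [memℓp_gen_iff hp2]
    have := (lp.memℓp F).summable hp2
    simpa [Real.norm_eq_abs, abs_abs] using this
  have hH' : Memℓp (fun j => |H j|) 2 := by
    rw [memℓp_gen_iff hp2]
    have := (lp.memℓp H).summable hp2
    simpa [Real.norm_eq_abs, abs_abs] using this
  set P : lp (fun _ : ℕ => ℝ) 2 :=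
    (⟨fun j => |F j|, hF'⟩ : lp (fun _ : ℕ => ℝ) 2) + ⟨fun j => |H j|, hH'⟩ with hP
  have hPapp : ∀ j, P j = |F j| + |H j| := fun j => rfl
  have hkeyP : ∀ j, ‖a j‖ ≤ ‖P j‖ := by
    intro j
    rw [Real.norm_eq_abs, Real.norm_eq_abs, hPapp j,
      abs_of_nonneg (by positivity : (0:ℝ) ≤ |F j| + |H j|)]
    exact key j
  have hpow : ∀ j : ℕ, ‖a j‖ ^ (2:ℝ≥0∞).toReal ≤ ‖P j‖ ^ (2:ℝ≥0∞).toReal :=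
    fun j => Real.rpow_le_rpow (norm_nonneg _) (hkeyP j) hp2.le
  have ha : Memℓp a 2 := by
    rw [memℓp_gen_iff hp2]
    exact Summable.of_nonneg_of_le
      (fun j => Real.rpow_nonneg (norm_nonneg _) _) hpow
      ((lp.memℓp P).summable hp2)
  set A : lp (fun _ : ℕ => ℝ) 2 := ⟨a, ha⟩ with hA
  have hAapp : ∀ j, A j = a j := fun j => rfl
  have hAP : ‖A‖ ≤ ‖P‖ := by
    have h2 : ‖A‖ ^ (2:ℝ≥0∞).toReal ≤ ‖P‖ ^ (2:ℝ≥0∞).toReal := by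
      rw [lp.norm_rpow_eq_tsum hp2, lp.norm_rpow_eq_tsum hp2]
      exact Summable.tsum_le_tsum hpow ((lp.memℓp A).summable hp2) ((lp.memℓp P).summable hp2)
    have e : ((2:ℝ≥0∞)).toReal = ((2:ℕ):ℝ) := by norm_num
    rw [e, Real.rpow_natCast, Real.rpow_natCast] at h2
    exact le_of_pow_le_pow_left₀ two_ne_zero (norm_nonneg P) h2
  have hFnorm : ‖(⟨fun j => |F j|, hF'⟩ : lp (fun _ : ℕ => ℝ) 2)‖ = ‖F‖ := by
    rw [lp.norm_eq_tsum_rpow hp2, lp.norm_eq_tsum_rpow hp2]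
    congr 1
    apply tsum_congr
    intro j
    simp [Real.norm_eq_abs, abs_abs]
  have hHnorm : ‖(⟨fun j => |H j|, hH'⟩ : lp (fun _ : ℕ => ℝ) 2)‖ = ‖H‖ := by
    rw [lp.norm_eq_tsum_rpow hp2, lp.norm_eq_tsum_rpow hp2]
    congr 1
    apply tsum_congr
    intro j
    simp [Real.norm_eq_abs, abs_abs]
  refine ⟨b.repr.symm A, ?_, ?_⟩
  · intro i
    rw [hg i]
    rw [LinearIsometryEquiv.apply_symm_apply]
    show |c i + d i| ≤ |a (i - 1)|
    rw [abs_of_nonneg (ha_nonneg _)]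
    match i with
    | 0 => simpa [ha_def] using le_max_left |c 0 + d 0| |c 1 + d 1|
    | 1 => simpa [ha_def] using le_max_right |c 0 + d 0| |c 1 + d 1|
    | (n+2) => simp [ha_def]
  · calc ‖b.repr.symm A‖ = ‖A‖ := by rw [LinearIsometryEquiv.norm_map]
      _ ≤ ‖P‖ := hAP
      _ ≤ ‖F‖ + ‖H‖ := by
          rw [hP]
          exact (norm_add_le _ _).trans (by rw [hFnorm, hHnorm])
      _ = ‖f‖ + ‖h‖ := by rw [hF, hH, LinearIsometryEquiv.norm_map, LinearIsometryEquiv.norm_map]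
end
end

section
/- In the same Hilbert-space example (shifted orthonormal basis functionals, Θ = ℓ²): condition (A₂) holds, i.e., for every c ∈ Θ̃ and ε > 0 there exist k ∈ ℕ and f ∈ M^{c^{(k)}} with ‖f‖ < ε; consequently Θ̃ is a CB-space and {g_i} is a Banach frame for X with respect to Θ̃. -/
open Filter Topology

noncomputable section

/-!
Since `g i f = (b.repr f) (i - 1)`, a vector `f` dominates `c` exactly when `b.repr f` dominates
the tail `(c 1, c 2, …)` coordinatewise (plus the single condition `|c 0| ≤ |g 0 f|`). So `‖f‖`
bounds the `ℓ²`-norm of that tail, and conversely `b.repr.symm` of a truncated tail dominates the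
correspondingly truncated `c`; `(A₂)` thus reduces to the `ℓ²`-tails of a square-summable sequence
tending to zero. The reconstruction operator is `c ↦ b.repr.symm (c 1, c 2, …)`, extended linearly
from the sequences with square-summable tail to all sequences; the same domination estimate gives
both its boundedness and the lower frame bound.
-/

open scoped ENNReal

lemma memℓp_nat_succ_iff {E : Type*} [NormedAddCommGroup E] {p : ℝ≥0∞} (hp : 0 < p.toReal)
    {c : ℕ → E} : Memℓp (fun j => c (j + 1)) p ↔ Memℓp c p := by
  rw [memℓp_gen_iff hp, memℓp_gen_iff hp]
  exact summable_nat_add_iff (f := fun i => ‖c i‖ ^ p.toReal) 1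

lemma lp.exists_norm_truncate_lt {E : ℕ → Type*} [∀ i, NormedAddCommGroup (E i)] {p : ℝ≥0∞}
    [Fact (1 ≤ p)] (hp : p ≠ ⊤) (a : lp E p) {ε : ℝ} (hε : 0 < ε) :
    ∃ n, ∃ t : lp E p, (∀ j, t j = if j < n then 0 else a j) ∧ ‖t‖ < ε := by
  have hlim : Tendsto (fun n => a - ∑ i ∈ Finset.range n, lp.single p i (a i)) atTop (𝓝 0) := by
    simpa using (tendsto_const_nhds (x := a)).sub (lp.hasSum_single hp a).tendsto_sum_nat
  obtain ⟨n, hn⟩ := eventually_atTop.1 (hlim.norm.eventually (gt_mem_nhds (by simpa using hε)))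
  refine ⟨n, _, fun j => ?_, hn n le_rfl⟩
  simp only [lp.coeFn_sub, lp.coeFn_sum, Pi.sub_apply, Finset.sum_apply, lp.single_apply,
    Finset.sum_pi_single, Finset.mem_range]
  split_ifs <;> simp

section DomNorm

variable {ι X : Type*} [SeminormedAddCommGroup X] (g : ι → X → ℝ)

/-- The norm of `Θ̃`: the infimum of `‖f‖` over `f ∈ M^c`. -/
def domNorm (c : ι → ℝ) : ℝ :=
  sInf {r | ∃ f : X, (∀ i, |c i| ≤ |g i f|) ∧ r = ‖f‖}

variable {g}

lemma domNorm_nonneg (c : ι → ℝ) : 0 ≤ domNorm g c :=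
  Real.sInf_nonneg (by rintro _ ⟨f, -, rfl⟩; exact norm_nonneg f)

lemma domNorm_le {c : ι → ℝ} {f : X} (h : ∀ i, |c i| ≤ |g i f|) : domNorm g c ≤ ‖f‖ :=
  csInf_le ⟨0, by rintro _ ⟨f, -, rfl⟩; exact norm_nonneg f⟩ ⟨f, h, rfl⟩

lemma le_domNorm {c : ι → ℝ} {r : ℝ} (hne : ∃ f : X, ∀ i, |c i| ≤ |g i f|)
    (h : ∀ f : X, (∀ i, |c i| ≤ |g i f|) → r ≤ ‖f‖) : r ≤ domNorm g c :=
  le_csInf (let ⟨f, hf⟩ := hne; ⟨‖f‖, f, hf, rfl⟩) (by rintro _ ⟨f, hf, rfl⟩; exact h f hf)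

end DomNorm

lemma tendsto_domNorm_truncate {X : Type*} [SeminormedAddCommGroup X] {g : ℕ → X → ℝ} {c : ℕ → ℝ}
    (hA₂ : ∀ ε > 0, ∃ k : ℕ, ∃ f : X, (∀ i, |if i < k then (0 : ℝ) else c i| ≤ |g i f|) ∧ ‖f‖ < ε) :
    Tendsto (fun n => domNorm g (fun i => if i < n then 0 else c i)) atTop (𝓝 0) := by
  refine tendsto_order.2 ⟨fun a ha => Eventually.of_forall fun n =>
    ha.trans_le (domNorm_nonneg _), fun ε hε => ?_⟩
  obtain ⟨k, f, hf, hfε⟩ := hA₂ ε hε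
  refine eventually_atTop.2 ⟨k, fun n hn => (domNorm_le fun i => ?_).trans_lt hfε⟩
  by_cases hin : i < n
  · simp [hin]
  · simpa [hin, show ¬i < k by omega] using hf i

section TailMemℓp

variable (𝕜 E : Type*) [NormedField 𝕜] [NormedAddCommGroup E] [NormedSpace 𝕜 E]
  (p : ℝ≥0∞)

def tailMemℓp : Submodule 𝕜 (ℕ → E) where
  carrier := {c | Memℓp (fun j => c (j + 1)) p}
  add_mem' hc hd := hc.add hd
  zero_mem' := zero_memℓp
  smul_mem' r _ hc := hc.const_smul r

def tailLp [Fact (1 ≤ p)] : tailMemℓp 𝕜 E p →ₗ[𝕜] lp (fun _ : ℕ => E) p where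
  toFun c := ⟨fun j => (c : ℕ → E) (j + 1), c.2⟩
  map_add' _ _ := rfl
  map_smul' _ _ := rfl

variable {𝕜 E p}

@[simp]
lemma tailLp_apply [Fact (1 ≤ p)] (c : tailMemℓp 𝕜 E p) (j : ℕ) :
    tailLp 𝕜 E p c j = (c : ℕ → E) (j + 1) := rfl

end TailMemℓp

section ShiftedBasis

variable {X : Type*} [NormedAddCommGroup X] [InnerProductSpace ℝ X] (b : HilbertBasis ℕ ℝ X)

/-- The functionals `g i` of the example; since `0 - 1 = 0` in `ℕ`, `g 0 = g 1`. -/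
def shiftedCoeff (i : ℕ) (f : X) : ℝ :=
  b.repr f (i - 1)

variable {b}

@[simp]
lemma shiftedCoeff_succ (j : ℕ) (f : X) : shiftedCoeff b (j + 1) f = b.repr f j := rfl

lemma memℓp_shiftedCoeff (f : X) : Memℓp (fun i => shiftedCoeff b i f) 2 :=
  (memℓp_nat_succ_iff (by norm_num)).1 (b.repr f).2

lemma memℓp_tail_of_dominated {c : ℕ → ℝ} {f : X} (h : ∀ i, |c i| ≤ |shiftedCoeff b i f|) :
    c ∈ tailMemℓp ℝ ℝ 2 :=
  (b.repr f).2.mono' fun j => by simpa using h (j + 1)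

lemma abs_single_le_shiftedCoeff_basis (i j : ℕ) :
    |(Pi.single i (1 : ℝ) : ℕ → ℝ) j| ≤ |shiftedCoeff b j (b (i - 1))| := by
  by_cases hji : j = i
  · subst hji
    simp [shiftedCoeff, HilbertBasis.repr_self, lp.single_apply]
  · simp [hji]

theorem exists_truncate_dominated_norm_lt {c : ℕ → ℝ} {f₀ : X}
    (h₀ : ∀ i, |c i| ≤ |shiftedCoeff b i f₀|) {ε : ℝ} (hε : 0 < ε) :
    ∃ k : ℕ, ∃ f : X,
      (∀ i, |if i < k then (0 : ℝ) else c i| ≤ |shiftedCoeff b i f|) ∧ ‖f‖ < ε := by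
  obtain ⟨n, t, ht, htε⟩ :=
    lp.exists_norm_truncate_lt (by norm_num) (tailLp ℝ ℝ 2 ⟨c, memℓp_tail_of_dominated h₀⟩) hε
  refine ⟨n + 1, b.repr.symm t, fun i => ?_, by simpa using htε⟩
  cases i with
  | zero => simp
  | succ j => simp [ht]

theorem exists_reconstruction_shiftedCoeff : ∃ V : (ℕ → ℝ) →ₗ[ℝ] X,
    (∀ (c : ℕ → ℝ) (f : X), (∀ i, |c i| ≤ |shiftedCoeff b i f|) → ‖V c‖ ≤ ‖f‖) ∧
      ∀ f : X, V (fun i => shiftedCoeff b i f) = f := by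
  obtain ⟨V, hV⟩ := LinearMap.exists_extend (b.repr.symm.toLinearMap ∘ₗ tailLp ℝ ℝ 2)
  have hV_tail (c : ℕ → ℝ) (hc : c ∈ tailMemℓp ℝ ℝ 2) : V c = b.repr.symm (tailLp ℝ ℝ 2 ⟨c, hc⟩) :=
    LinearMap.congr_fun hV ⟨c, hc⟩
  refine ⟨V, fun c f hf => ?_, fun f => ?_⟩
  · rw [hV_tail c (memℓp_tail_of_dominated hf), LinearIsometryEquiv.norm_map,
      ← b.repr.norm_map f]
    exact lp.norm_mono two_ne_zero fun j => by simpa using hf (j + 1)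
  · rw [hV_tail _ (memℓp_tail_of_dominated fun i => le_rfl), ← b.repr.symm_apply_apply f]
    congr 1
    ext j
    simp

end ShiftedBasis

theorem shifted_ONB_A2_CB_banach_frame_general
    {X : Type*} [NormedAddCommGroup X] [InnerProductSpace ℝ X]
    (b : HilbertBasis ℕ ℝ X)
    (g : ℕ → X → ℝ)
    (hg : ∀ i f, g i f = (b.repr f : ℕ → ℝ) (i - 1))
    (Θt : Set (ℕ → ℝ))
    (hΘt : Θt = {c | Memℓp c 2 ∧ ∃ f : X, ∀ i, |c i| ≤ |g i f|})
    (Nt : (ℕ → ℝ) → ℝ)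
    (hNt : ∀ c, Nt c = sInf {r | ∃ f : X, (∀ i, |c i| ≤ |g i f|) ∧ r = ‖f‖}) :
    (∀ c ∈ Θt, ∀ ε > 0, ∃ k : ℕ, ∃ f : X,
      (∀ i, |if i < k then (0 : ℝ) else c i| ≤ |g i f|) ∧ ‖f‖ < ε) ∧
    ((∀ i, Pi.single i (1 : ℝ) ∈ Θt) ∧
      ∀ c ∈ Θt,
        Tendsto (fun n => Nt (fun i => if i < n then 0 else c i)) atTop (nhds 0)) ∧
    ((∀ f : X, (fun i => g i f) ∈ Θt ∧ Nt (fun i => g i f) ≤ ‖f‖) ∧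
      (∃ A > (0 : ℝ), ∀ f : X, A * ‖f‖ ≤ Nt (fun i => g i f)) ∧
      (∃ V : (ℕ → ℝ) →ₗ[ℝ] X, (∃ K : ℝ, ∀ c ∈ Θt, ‖V c‖ ≤ K * Nt c) ∧
        ∀ f : X, V (fun i => g i f) = f)) := by
  obtain rfl : g = shiftedCoeff b := funext fun i => funext (hg i)
  obtain rfl : Nt = domNorm (shiftedCoeff b) := funext hNt
  subst hΘt
  have hA₂ : ∀ c ∈ {c | Memℓp c 2 ∧ ∃ f : X, ∀ i, |c i| ≤ |shiftedCoeff b i f|}, ∀ ε > 0,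
      ∃ k : ℕ, ∃ f : X,
        (∀ i, |if i < k then (0 : ℝ) else c i| ≤ |shiftedCoeff b i f|) ∧ ‖f‖ < ε :=
    fun c ⟨_, _, hf⟩ _ hε => exists_truncate_dominated_norm_lt hf hε
  obtain ⟨V, hV_le, hV_inv⟩ := exists_reconstruction_shiftedCoeff (b := b)
  refine ⟨hA₂, ⟨fun i => ⟨?_, b (i - 1), abs_single_le_shiftedCoeff_basis i⟩,
    fun c hc => tendsto_domNorm_truncate (hA₂ c hc)⟩,
    fun f => ⟨⟨memℓp_shiftedCoeff f, f, fun _ => le_rfl⟩, domNorm_le fun _ => le_rfl⟩,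
    ⟨1, one_pos, fun f => ?_⟩, V, ⟨1, fun c ⟨_, f, hf⟩ => ?_⟩, hV_inv⟩
  · exact lp.coeFn_single (E := fun _ : ℕ => ℝ) 2 i 1 ▸ (lp.single 2 i 1).2
  · rw [one_mul]
    exact le_domNorm ⟨f, fun _ => le_rfl⟩ fun h hh => hV_inv f ▸ hV_le _ h hh
  · rw [one_mul]
    exact le_domNorm ⟨f, hf⟩ (hV_le c)

/-- in the Hilbert-space example (shifted orthonormal basis functionals,
`Θ = ℓ²`): condition `(𝒜₂)` holds — for every `c ∈ Θ̃` and `ε > 0` there are `k` and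
`f ∈ M^{c^{(k)}}` with `‖f‖ < ε`; consequently `Θ̃` (with norm
`Nt c = inf {‖f‖ : f ∈ M^c}`) is a CB-space and `(g i)` is a Banach frame for `X` with
respect to `Θ̃`. -/
theorem shifted_ONB_A2_CB_banach_frame
    {X : Type*} [NormedAddCommGroup X] [InnerProductSpace ℝ X] [CompleteSpace X]
    (b : HilbertBasis ℕ ℝ X)
    (g : ℕ → X → ℝ)
    (hg : ∀ i f, g i f = (b.repr f : ℕ → ℝ) (i - 1))
    (Θt : Set (ℕ → ℝ))
    (hΘt : Θt = {c | Memℓp c 2 ∧ ∃ f : X, ∀ i, |c i| ≤ |g i f|})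
    (Nt : (ℕ → ℝ) → ℝ)
    (hNt : ∀ c, Nt c = sInf {r | ∃ f : X, (∀ i, |c i| ≤ |g i f|) ∧ r = ‖f‖}) :
    (∀ c ∈ Θt, ∀ ε > 0, ∃ k : ℕ, ∃ f : X,
      (∀ i, |if i < k then (0 : ℝ) else c i| ≤ |g i f|) ∧ ‖f‖ < ε) ∧
    ((∀ i, Pi.single i (1 : ℝ) ∈ Θt) ∧
      ∀ c ∈ Θt,
        Tendsto (fun n => Nt (fun i => if i < n then 0 else c i)) atTop (nhds 0)) ∧
    ((∀ f : X, (fun i => g i f) ∈ Θt ∧ Nt (fun i => g i f) ≤ ‖f‖) ∧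
      (∃ A > (0 : ℝ), ∀ f : X, A * ‖f‖ ≤ Nt (fun i => g i f)) ∧
      (∃ V : (ℕ → ℝ) →ₗ[ℝ] X, (∃ K : ℝ, ∀ c ∈ Θt, ‖V c‖ ≤ K * Nt c) ∧
        ∀ f : X, V (fun i => g i f) = f)) :=
  shifted_ONB_A2_CB_banach_frame_general b g hg Θt hΘt Nt hNt
end
end
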